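/- arXiv:0710.5462 — 4 statements merged into one kernel-verified Lean document; each statement's English description precedes it below -/
import Mathlib

section
/- With B, σ, B* as above, the bilinear form on D(B) = B ⊗ B* defined by ⟨a ⊗ α, b ⊗ β⟩ = ⟨a^σ, β⟩⟨α, b^σ⟩ is symmetric and associative with respect to the double product; hence if σ is invertible, D(B) is a symmetric algebra. -/
/-!
Statement 1: Let `B` be a bialgebra over a field `k` equipped with a `k`-linear map `σ`
that is both an algebra anti-homomorphism and a coalgebra anti-homomorphism, and let
`C` play the role of the (graded) dual bialgebra `B*`, i.e. `C` is a bialgebra equipped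
with a pairing `p : B →ₗ C →ₗ k` for which the product of `C` is dual to the coproduct
of `B` and the coproduct of `C` is dual to the product of `B` (this is the structure of
the graded dual of a graded bialgebra with finite dimensional pieces).  Then the product
on `D(B) = B ⊗ C` defined by
`(a ⊗ α)·(b ⊗ β) = Σ a₂ b₁ ⊗ β₂ α₁ ⟨σ a₁, β₁⟩ ⟨α₂, b₂⟩`
is associative.
-/

open TensorProduct

variable {k : Type*} [Field k]
variable {B C : Type*} [Ring B] [Ring C] [Bialgebra k B] [Bialgebra k C]

/-- The pairing extended to `B ⊗ C`. -/
noncomputable def pairT (p : B →ₗ[k] C →ₗ[k] k) : B ⊗[k] C →ₗ[k] k :=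
  TensorProduct.lift p

/-- The pairing between `B ⊗ B` and `C ⊗ C` defined componentwise. -/
noncomputable def pairT2 (p : B →ₗ[k] C →ₗ[k] k) :
    (B ⊗[k] B) ⊗[k] (C ⊗[k] C) →ₗ[k] k :=
  LinearMap.mul' k k ∘ₗ TensorProduct.map (pairT p) (pairT p) ∘ₗ
    (TensorProduct.tensorTensorTensorComm k B B C C).toLinearMap

/-- The multiplication map of the double `D(B) = B ⊗ B*`:
`(a ⊗ α)·(b ⊗ β) = Σ a₂ b₁ ⊗ β₂ α₁ ⟨a₁^σ, β₁⟩ ⟨α₂, b₂^σ⟩`. -/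
noncomputable def doubleMul (σ : B →ₗ[k] B) (p : B →ₗ[k] C →ₗ[k] k) :
    (B ⊗[k] C) ⊗[k] (B ⊗[k] C) →ₗ[k] B ⊗[k] C :=
  (TensorProduct.lid k (B ⊗[k] C)).toLinearMap
  ∘ₗ TensorProduct.map
      (pairT2 p ∘ₗ TensorProduct.map (TensorProduct.map σ σ) LinearMap.id)
      (TensorProduct.map (LinearMap.mul' k B) (LinearMap.mul' k C))
  ∘ₗ (TensorProduct.tensorTensorTensorComm k (B ⊗[k] B) (B ⊗[k] B)
        (C ⊗[k] C) (C ⊗[k] C)).toLinearMap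
  ∘ₗ TensorProduct.map
      ((TensorProduct.tensorTensorTensorComm k B B B B).toLinearMap
        ∘ₗ TensorProduct.map LinearMap.id (TensorProduct.comm k B B).toLinearMap)
      ((TensorProduct.tensorTensorTensorComm k C C C C).toLinearMap
        ∘ₗ TensorProduct.map LinearMap.id (TensorProduct.comm k C C).toLinearMap
        ∘ₗ (TensorProduct.comm k (C ⊗[k] C) (C ⊗[k] C)).toLinearMap)
  ∘ₗ (TensorProduct.tensorTensorTensorComm k (B ⊗[k] B) (C ⊗[k] C)
        (B ⊗[k] B) (C ⊗[k] C)).toLinearMap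
  ∘ₗ TensorProduct.map
      (TensorProduct.map (Coalgebra.comul (R := k) (A := B))
        (Coalgebra.comul (R := k) (A := C)))
      (TensorProduct.map (Coalgebra.comul (R := k) (A := B))
        (Coalgebra.comul (R := k) (A := C)))


/-- The bilinear form `⟨a ⊗ α, b ⊗ β⟩ = ⟨a^σ, β⟩⟨α, b^σ⟩` on the double `D(B) = B ⊗ B*`.
(Here `⟨α, b^σ⟩ = p (σ b) α`.) -/
noncomputable def doubleForm (σ : B →ₗ[k] B) (p : B →ₗ[k] C →ₗ[k] k) :
    (B ⊗[k] C) ⊗[k] (B ⊗[k] C) →ₗ[k] k :=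
  LinearMap.mul' k k
  ∘ₗ TensorProduct.map
      (pairT p ∘ₗ TensorProduct.map σ LinearMap.id)
      (pairT p ∘ₗ TensorProduct.map σ LinearMap.id ∘ₗ (TensorProduct.comm k C B).toLinearMap)
  ∘ₗ (TensorProduct.tensorTensorTensorComm k B C C B).toLinearMap
  ∘ₗ TensorProduct.map LinearMap.id (TensorProduct.comm k B C).toLinearMap


/-!
With `q = p ∘ σ` the form reads `⟨a ⊗ α, b ⊗ β⟩ = q(a, β) q(b, α)`, and the hypotheses on `σ`
and `p` say that `q` turns products on either side into coproducts on the other, with the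
tensor factors swapped. Expanding with them (Sweedler notation),
`⟨(a ⊗ α)(b ⊗ β), c ⊗ γ⟩ = Σ q(a₂b₁, γ) q(b₂c₁, α) q(c₂a₁, β)`,
which is invariant under cyclically permuting `a ⊗ α, b ⊗ β, c ⊗ γ`; with the symmetry of the
form this gives `⟨xy, z⟩ = ⟨yz, x⟩ = ⟨x, yz⟩`.
The form is also the tensor product of the pairings `a ↦ q(a, -)` and `α ↦ q(-, α)`, which are
injective when `σ` is bijective and `p` is nondegenerate, and tensor products of injective
pairings are again nondegenerate.
-/

theorem TensorProduct.eq_zero_of_forall_dualDistrib_eq_zero {V W V' W' : Type*}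
    [AddCommGroup V] [Module k V] [AddCommGroup W] [Module k W]
    [AddCommGroup V'] [Module k V'] [AddCommGroup W'] [Module k W']
    {P : V →ₗ[k] W' →ₗ[k] k} {Q : W →ₗ[k] V' →ₗ[k] k}
    (hP : Function.Injective P) (hQ : Function.Injective Q) {x : V ⊗[k] W}
    (hx : ∀ w' v', dualDistrib k V W (P.flip w' ⊗ₜ Q.flip v') x = 0) : x = 0 := by
  classical
  let e := Module.Basis.ofVectorSpace k W
  obtain ⟨f, rfl⟩ := (equivFinsuppOfBasisRight e).symm.surjective x
  have hQe : LinearIndependent k (Q ∘ e) :=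
    e.linearIndependent.map' Q (LinearMap.ker_eq_bot.mpr hQ)
  have hcoef (w' : W') : ∀ s ∈ f.support, P (f s) w' = 0 := by
    refine linearIndependent_iff'.mp hQe _ _ (LinearMap.ext fun v' ↦ ?_)
    simpa [equivFinsuppOfBasisRight_symm_apply, Finsupp.sum, Finset.sum_apply'] using hx w' v'
  suffices f = 0 by simp [this]
  ext s
  by_cases hs : s ∈ f.support
  · exact (injective_iff_map_eq_zero P).mp hP _ (LinearMap.ext fun w' ↦ hcoef w' s hs)
  · simpa using hs

section

variable (σ : B →ₗ[k] B) (p : B →ₗ[k] C →ₗ[k] k)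

@[simp]
theorem pairT_tmul (a : B) (γ : C) : pairT p (a ⊗ₜ γ) = p a γ := rfl

@[simp]
theorem pairT2_tmul_tmul (a b : B) (γ δ : C) :
    pairT2 p ((a ⊗ₜ b) ⊗ₜ (γ ⊗ₜ δ)) = p a γ * p b δ := by
  simp [pairT2]

theorem pair_σ_mul_eq_sum (hσmul : ∀ a b : B, σ (a * b) = σ b * σ a)
    (hpmulB : ∀ (a b : B) (γ : C),
      pairT p ((a * b) ⊗ₜ γ) = pairT2 p ((a ⊗ₜ b) ⊗ₜ (Coalgebra.comul (R := k) γ)))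
    {γ : C} {S : Finset (C × C)} (hγ : Coalgebra.comul (R := k) γ = ∑ w ∈ S, w.1 ⊗ₜ w.2)
    (x y : B) : p (σ (x * y)) γ = ∑ w ∈ S, p (σ y) w.1 * p (σ x) w.2 := by
  simpa [hσmul, hγ, tmul_sum] using hpmulB (σ y) (σ x) γ

theorem pair_σ_apply_mul_eq_sum
    (hσcomul : ∀ a : B,
      Coalgebra.comul (R := k) (σ a)
        = (TensorProduct.comm k B B) (TensorProduct.map σ σ (Coalgebra.comul (R := k) a)))
    (hpmulC : ∀ (a : B) (γ δ : C),
      pairT p (a ⊗ₜ (γ * δ)) = pairT2 p ((Coalgebra.comul (R := k) a) ⊗ₜ (γ ⊗ₜ δ)))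
    {x : B} {S : Finset (B × B)} (hx : Coalgebra.comul (R := k) x = ∑ l ∈ S, l.1 ⊗ₜ l.2)
    (γ δ : C) : p (σ x) (γ * δ) = ∑ l ∈ S, p (σ l.2) γ * p (σ l.1) δ := by
  simpa [hσcomul, hx, sum_tmul] using hpmulC (σ x) γ δ

@[simp]
theorem doubleForm_tmul (a b : B) (α β : C) :
    doubleForm σ p ((a ⊗ₜ α) ⊗ₜ (b ⊗ₜ β)) = p (σ a) β * p (σ b) α := by
  simp [doubleForm]

theorem doubleForm_comp_comm :
    doubleForm σ p ∘ₗ (TensorProduct.comm k (B ⊗[k] C) (B ⊗[k] C)).toLinearMap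
      = doubleForm σ p := by
  ext a α b β
  simp [mul_comm]

theorem doubleForm_comm_apply (x y : B ⊗[k] C) :
    doubleForm σ p (y ⊗ₜ x) = doubleForm σ p (x ⊗ₜ y) :=
  congr($(doubleForm_comp_comm σ p) (x ⊗ₜ y))

theorem doubleMul_tmul {a b : B} {α β : C} {Sa Sb : Finset (B × B)} {Sα Sβ : Finset (C × C)}
    (ha : Coalgebra.comul (R := k) a = ∑ i ∈ Sa, i.1 ⊗ₜ i.2)
    (hb : Coalgebra.comul (R := k) b = ∑ j ∈ Sb, j.1 ⊗ₜ j.2)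
    (hα : Coalgebra.comul (R := k) α = ∑ u ∈ Sα, u.1 ⊗ₜ u.2)
    (hβ : Coalgebra.comul (R := k) β = ∑ v ∈ Sβ, v.1 ⊗ₜ v.2) :
    doubleMul σ p ((a ⊗ₜ α) ⊗ₜ (b ⊗ₜ β))
      = ∑ v ∈ Sβ, ∑ j ∈ Sb, ∑ u ∈ Sα, ∑ i ∈ Sa,
          (p (σ i.1) v.1 * p (σ j.2) u.2) • ((i.2 * j.1) ⊗ₜ (v.2 * u.1)) := by
  simp [doubleMul, ha, hb, hα, hβ, sum_tmul, tmul_sum]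

theorem doubleForm_doubleMul_tmul (hσmul : ∀ a b : B, σ (a * b) = σ b * σ a)
    (hσcomul : ∀ a : B,
      Coalgebra.comul (R := k) (σ a)
        = (TensorProduct.comm k B B) (TensorProduct.map σ σ (Coalgebra.comul (R := k) a)))
    (hpmulC : ∀ (a : B) (γ δ : C),
      pairT p (a ⊗ₜ (γ * δ)) = pairT2 p ((Coalgebra.comul (R := k) a) ⊗ₜ (γ ⊗ₜ δ)))
    (hpmulB : ∀ (a b : B) (γ : C),
      pairT p ((a * b) ⊗ₜ γ) = pairT2 p ((a ⊗ₜ b) ⊗ₜ (Coalgebra.comul (R := k) γ)))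
    {a b c : B} {α β γ : C} {Sa Sb Sc : Finset (B × B)} {Sα Sβ : Finset (C × C)}
    (ha : Coalgebra.comul (R := k) a = ∑ i ∈ Sa, i.1 ⊗ₜ i.2)
    (hb : Coalgebra.comul (R := k) b = ∑ j ∈ Sb, j.1 ⊗ₜ j.2)
    (hc : Coalgebra.comul (R := k) c = ∑ l ∈ Sc, l.1 ⊗ₜ l.2)
    (hα : Coalgebra.comul (R := k) α = ∑ u ∈ Sα, u.1 ⊗ₜ u.2)
    (hβ : Coalgebra.comul (R := k) β = ∑ v ∈ Sβ, v.1 ⊗ₜ v.2) :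
    doubleForm σ p (doubleMul σ p ((a ⊗ₜ α) ⊗ₜ (b ⊗ₜ β)) ⊗ₜ (c ⊗ₜ γ))
      = ∑ i ∈ Sa, ∑ j ∈ Sb, ∑ l ∈ Sc,
          p (σ (i.2 * j.1)) γ * p (σ (j.2 * l.1)) α * p (σ (l.2 * i.1)) β := by
  simp only [doubleMul_tmul σ p ha hb hα hβ, sum_tmul, map_sum, smul_tmul', map_smul,
    doubleForm_tmul, LinearMap.smul_apply, smul_eq_mul,
    pair_σ_apply_mul_eq_sum σ p hσcomul hpmulC hc, pair_σ_mul_eq_sum σ p hσmul hpmulB hα,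
    pair_σ_mul_eq_sum σ p hσmul hpmulB hβ, Finset.mul_sum, Finset.sum_mul]
  -- each call moves the sum over the given index set outermost
  simp only [Finset.sum_comm (t := Sβ)]
  simp only [Finset.sum_comm (t := Sα)]
  simp only [Finset.sum_comm (t := Sc)]
  simp only [Finset.sum_comm (t := Sb)]
  simp only [Finset.sum_comm (t := Sa)]
  refine Finset.sum_congr rfl fun i _ ↦ Finset.sum_congr rfl fun j _ ↦ Finset.sum_congr rfl
    fun l _ ↦ Finset.sum_congr rfl fun u _ ↦ Finset.sum_congr rfl fun v _ ↦ by ring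

theorem doubleForm_apply_tmul_eq_dualDistrib (x : B ⊗[k] C) (b : B) (β : C) :
    doubleForm σ p (x ⊗ₜ (b ⊗ₜ β)) = dualDistrib k B C ((p ∘ₗ σ).flip β ⊗ₜ p (σ b)) x := by
  induction x with
  | zero => simp
  | tmul a α => simp [dualDistrib_apply]
  | add x y hx hy => simp [add_tmul, hx, hy]

end

theorem doubleForm_symmetric_associative_general
    (σ : B →ₗ[k] B)
    (hσmul : ∀ a b : B, σ (a * b) = σ b * σ a)
    (hσcomul : ∀ a : B,
      Coalgebra.comul (R := k) (σ a)
        = (TensorProduct.comm k B B) (TensorProduct.map σ σ (Coalgebra.comul (R := k) a)))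
    (p : B →ₗ[k] C →ₗ[k] k)
    (hpmulC : ∀ (a : B) (γ δ : C),
      pairT p (a ⊗ₜ (γ * δ)) = pairT2 p ((Coalgebra.comul (R := k) a) ⊗ₜ (γ ⊗ₜ δ)))
    (hpmulB : ∀ (a b : B) (γ : C),
      pairT p ((a * b) ⊗ₜ γ) = pairT2 p ((a ⊗ₜ b) ⊗ₜ (Coalgebra.comul (R := k) γ))) :
    -- the form is symmetric
    (doubleForm σ p ∘ₗ (TensorProduct.comm k (B ⊗[k] C) (B ⊗[k] C)).toLinearMap
        = doubleForm σ p)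
    -- the form is associative with respect to the double product:
    -- `⟨x·y, z⟩ = ⟨x, y·z⟩`
    ∧ (doubleForm σ p ∘ₗ
          TensorProduct.map (doubleMul σ p) (LinearMap.id (M := B ⊗[k] C))
        = doubleForm σ p ∘ₗ
            TensorProduct.map (LinearMap.id (M := B ⊗[k] C)) (doubleMul σ p)
          ∘ₗ (TensorProduct.assoc k (B ⊗[k] C) (B ⊗[k] C) (B ⊗[k] C)).toLinearMap)
    -- if `σ` is invertible and the pairing is nondegenerate, the form is nondegenerate,
    -- so `D(B)` is a symmetric algebra
    ∧ (Function.Bijective σ →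
        (∀ b : B, (∀ γ : C, p b γ = 0) → b = 0) →
        (∀ γ : C, (∀ b : B, p b γ = 0) → γ = 0) →
        ∀ x : B ⊗[k] C, (∀ y : B ⊗[k] C, doubleForm σ p (x ⊗ₜ y) = 0) → x = 0) := by
  refine ⟨doubleForm_comp_comm σ p, ?_, ?_⟩
  · ext a α b β c γ
    obtain ⟨Sa, ha⟩ := exists_finset (Coalgebra.comul (R := k) a)
    obtain ⟨Sb, hb⟩ := exists_finset (Coalgebra.comul (R := k) b)
    obtain ⟨Sc, hc⟩ := exists_finset (Coalgebra.comul (R := k) c)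
    obtain ⟨Sα, hα⟩ := exists_finset (Coalgebra.comul (R := k) α)
    obtain ⟨Sβ, hβ⟩ := exists_finset (Coalgebra.comul (R := k) β)
    obtain ⟨Sγ, hγ⟩ := exists_finset (Coalgebra.comul (R := k) γ)
    simp only [AlgebraTensorModule.curry_apply, curry_apply, LinearMap.coe_restrictScalars,
      LinearMap.comp_apply, LinearEquiv.coe_coe, map_tmul, LinearMap.id_apply, assoc_tmul]
    rw [← doubleForm_comm_apply σ p (a ⊗ₜ α),
      doubleForm_doubleMul_tmul σ p hσmul hσcomul hpmulC hpmulB ha hb hc hα hβ,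
      doubleForm_doubleMul_tmul σ p hσmul hσcomul hpmulC hpmulB hb hc ha hβ hγ, Finset.sum_comm]
    refine Finset.sum_congr rfl fun j _ ↦ ?_
    rw [Finset.sum_comm]
    exact Finset.sum_congr rfl fun l _ ↦ Finset.sum_congr rfl fun i _ ↦ by ring
  · intro hbij hB hC x hx
    have hq : Function.Injective (p ∘ₗ σ) :=
      ((injective_iff_map_eq_zero p).mpr fun b hb ↦ hB b fun γ ↦ by simp [hb]).comp hbij.1
    have hq' : Function.Injective (p ∘ₗ σ).flip := by
      refine (injective_iff_map_eq_zero _).mpr fun γ hγ ↦ hC γ fun b ↦ ?_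
      obtain ⟨a, rfl⟩ := hbij.2 b
      exact LinearMap.congr_fun hγ a
    exact eq_zero_of_forall_dualDistrib_eq_zero hq hq' fun β b ↦
      (doubleForm_apply_tmul_eq_dualDistrib σ p x b β).symm.trans (hx _)

/-- The bilinear form `⟨a ⊗ α, b ⊗ β⟩ = ⟨a^σ, β⟩⟨α, b^σ⟩` on
`D(B) = B ⊗ B*` is symmetric and associative with respect to the double product;
hence, if `σ` is invertible (and the pairing between `B` and its dual `B* = C` is
nondegenerate), `D(B)` is a symmetric algebra, i.e. the form is also nondegenerate. -/
theorem doubleForm_symmetric_associative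
    (σ : B →ₗ[k] B)
    (hσmul : ∀ a b : B, σ (a * b) = σ b * σ a) (hσone : σ 1 = 1)
    (hσcomul : ∀ a : B,
      Coalgebra.comul (R := k) (σ a)
        = (TensorProduct.comm k B B) (TensorProduct.map σ σ (Coalgebra.comul (R := k) a)))
    (hσcounit : ∀ a : B, Coalgebra.counit (R := k) (σ a) = Coalgebra.counit (R := k) a)
    (p : B →ₗ[k] C →ₗ[k] k)
    (hpmulC : ∀ (a : B) (γ δ : C),
      pairT p (a ⊗ₜ (γ * δ)) = pairT2 p ((Coalgebra.comul (R := k) a) ⊗ₜ (γ ⊗ₜ δ)))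
    (hpmulB : ∀ (a b : B) (γ : C),
      pairT p ((a * b) ⊗ₜ γ) = pairT2 p ((a ⊗ₜ b) ⊗ₜ (Coalgebra.comul (R := k) γ)))
    (hpone : ∀ γ : C, pairT p ((1 : B) ⊗ₜ γ) = Coalgebra.counit (R := k) γ)
    (hpone' : ∀ a : B, pairT p (a ⊗ₜ (1 : C)) = Coalgebra.counit (R := k) a) :
    -- the form is symmetric
    (doubleForm σ p ∘ₗ (TensorProduct.comm k (B ⊗[k] C) (B ⊗[k] C)).toLinearMap
        = doubleForm σ p)
    -- the form is associative with respect to the double product: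
    -- `⟨x·y, z⟩ = ⟨x, y·z⟩`
    ∧ (doubleForm σ p ∘ₗ
          TensorProduct.map (doubleMul σ p) (LinearMap.id (M := B ⊗[k] C))
        = doubleForm σ p ∘ₗ
            TensorProduct.map (LinearMap.id (M := B ⊗[k] C)) (doubleMul σ p)
          ∘ₗ (TensorProduct.assoc k (B ⊗[k] C) (B ⊗[k] C) (B ⊗[k] C)).toLinearMap)
    -- if `σ` is invertible and the pairing is nondegenerate, the form is nondegenerate,
    -- so `D(B)` is a symmetric algebra
    ∧ (Function.Bijective σ →
        (∀ b : B, (∀ γ : C, p b γ = 0) → b = 0) →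
        (∀ γ : C, (∀ b : B, p b γ = 0) → γ = 0) →
        ∀ x : B ⊗[k] C, (∀ y : B ⊗[k] C, doubleForm σ p (x ⊗ₜ y) = 0) → x = 0) :=
  doubleForm_symmetric_associative_general σ hσmul hσcomul p hpmulC hpmulB
end

section
/- If B is a cocommutative graded bialgebra with anti-automorphism σ as above, then the map Δ_r: D(B) → B ⊗ D(B) given by Δ_r(a ⊗ α) = Σ a₍₁₎ ⊗ a₍₂₎ ⊗ α is an algebra homomorphism, where D(B) carries the double product and B ⊗ D(B) the tensor product algebra structure. -/
/-!
Statement 2: Let `B` be a bialgebra over a field `k` equipped with a `k`-linear map `σ`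
that is both an algebra anti-homomorphism and a coalgebra anti-homomorphism, and let
`C` play the role of the (graded) dual bialgebra `B*`, i.e. `C` is a bialgebra equipped
with a pairing `p : B →ₗ C →ₗ k` for which the product of `C` is dual to the coproduct
of `B` and the coproduct of `C` is dual to the product of `B` (this is the structure of
the graded dual of a graded bialgebra with finite dimensional pieces).  Then the product
on `D(B) = B ⊗ C` defined by
`(a ⊗ α)·(b ⊗ β) = Σ a₂ b₁ ⊗ β₂ α₁ ⟨σ a₁, β₁⟩ ⟨α₂, b₂⟩`
is associative.
-/

open TensorProduct

variable {k : Type*} [Field k]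
variable {B C : Type*} [Ring B] [Ring C] [Bialgebra k B] [Bialgebra k C]

/-- The map `Δ_r : D(B) → B ⊗ D(B)`, `a ⊗ α ↦ Σ a₁ ⊗ a₂ ⊗ α`. -/
noncomputable def deltaR : B ⊗[k] C →ₗ[k] B ⊗[k] (B ⊗[k] C) :=
  (TensorProduct.assoc k B B C).toLinearMap
  ∘ₗ TensorProduct.map (Coalgebra.comul (R := k) (A := B)) LinearMap.id


section AuxiliaryForDeltaRAlgHom

set_option synthInstance.maxHeartbeats 1000000 in
set_option maxHeartbeats 1600000 in
/-- Tail of `doubleMul` after the comultiplication prefix. -/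
noncomputable def Grest (σ : B →ₗ[k] B) (p : B →ₗ[k] C →ₗ[k] k) :
    ((B ⊗[k] B) ⊗[k] (C ⊗[k] C)) ⊗[k] ((B ⊗[k] B) ⊗[k] (C ⊗[k] C)) →ₗ[k] B ⊗[k] C :=
  (TensorProduct.lid k (B ⊗[k] C)).toLinearMap
  ∘ₗ TensorProduct.map
      (pairT2 p ∘ₗ TensorProduct.map (TensorProduct.map σ σ) LinearMap.id)
      (TensorProduct.map (LinearMap.mul' k B) (LinearMap.mul' k C))
  ∘ₗ (TensorProduct.tensorTensorTensorComm k (B ⊗[k] B) (B ⊗[k] B)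
        (C ⊗[k] C) (C ⊗[k] C)).toLinearMap
  ∘ₗ TensorProduct.map
      ((TensorProduct.tensorTensorTensorComm k B B B B).toLinearMap
        ∘ₗ TensorProduct.map LinearMap.id (TensorProduct.comm k B B).toLinearMap)
      ((TensorProduct.tensorTensorTensorComm k C C C C).toLinearMap
        ∘ₗ TensorProduct.map LinearMap.id (TensorProduct.comm k C C).toLinearMap
        ∘ₗ (TensorProduct.comm k (C ⊗[k] C) (C ⊗[k] C)).toLinearMap)
  ∘ₗ (TensorProduct.tensorTensorTensorComm k (B ⊗[k] B) (C ⊗[k] C)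
        (B ⊗[k] B) (C ⊗[k] C)).toLinearMap

noncomputable def dmSw : B ⊗[k] (B ⊗[k] B) →ₗ[k] B ⊗[k] (B ⊗[k] B) :=
  (TensorProduct.assoc k B B B).toLinearMap
  ∘ₗ TensorProduct.map (TensorProduct.comm k B B).toLinearMap LinearMap.id
  ∘ₗ (TensorProduct.assoc k B B B).symm.toLinearMap

noncomputable def dmAa : (B ⊗[k] (B ⊗[k] B)) ⊗[k] (C ⊗[k] C) →ₗ[k]
    B ⊗[k] ((B ⊗[k] B) ⊗[k] (C ⊗[k] C)) :=
  (TensorProduct.assoc k B (B ⊗[k] B) (C ⊗[k] C)).toLinearMap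
  ∘ₗ TensorProduct.map dmSw LinearMap.id

noncomputable def dmAb : ((B ⊗[k] B) ⊗[k] B) ⊗[k] (C ⊗[k] C) →ₗ[k]
    B ⊗[k] ((B ⊗[k] B) ⊗[k] (C ⊗[k] C)) :=
  (TensorProduct.assoc k B (B ⊗[k] B) (C ⊗[k] C)).toLinearMap
  ∘ₗ TensorProduct.map (TensorProduct.assoc k B B B).toLinearMap LinearMap.id

noncomputable def dmQQ : ((B ⊗[k] B) ⊗[k] (C ⊗[k] C)) ⊗[k] ((B ⊗[k] B) ⊗[k] (C ⊗[k] C)) →ₗ[k]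
    ((B ⊗[k] (B ⊗[k] B)) ⊗[k] (C ⊗[k] C)) ⊗[k] (((B ⊗[k] B) ⊗[k] B) ⊗[k] (C ⊗[k] C)) :=
  TensorProduct.map
    (TensorProduct.map (TensorProduct.map LinearMap.id (Coalgebra.comul (R := k))) LinearMap.id)
    (TensorProduct.map (TensorProduct.map (Coalgebra.comul (R := k)) LinearMap.id) LinearMap.id)

noncomputable def dmPf : B ⊗[k] C →ₗ[k] B ⊗[k] ((B ⊗[k] B) ⊗[k] (C ⊗[k] C)) :=
  (TensorProduct.assoc k B (B ⊗[k] B) (C ⊗[k] C)).toLinearMap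
  ∘ₗ TensorProduct.map
      (TensorProduct.map LinearMap.id (Coalgebra.comul (R := k)) ∘ₗ Coalgebra.comul (R := k))
      (Coalgebra.comul (R := k))

set_option synthInstance.maxHeartbeats 1000000
set_option maxHeartbeats 1600000

lemma mulmul (u v : B ⊗[k] B) :
    u * v = TensorProduct.map (LinearMap.mul' k B) (LinearMap.mul' k B)
      ((TensorProduct.tensorTensorTensorComm k B B B B) (u ⊗ₜ v)) := by
  induction u using TensorProduct.induction_on with
  | zero => simp
  | tmul a b =>
    induction v using TensorProduct.induction_on with
    | zero => simp
    | tmul c d => simp [Algebra.TensorProduct.tmul_mul_tmul, LinearMap.mul'_apply]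
    | add x y hx hy => simp [mul_add, tmul_add, hx, hy]
  | add x y hx hy => simp [add_mul, add_tmul, hx, hy]

lemma coassoc' (a : B) :
    TensorProduct.map LinearMap.id (Coalgebra.comul (R := k)) (Coalgebra.comul a)
    = TensorProduct.assoc k B B B
        (TensorProduct.map (Coalgebra.comul (R := k)) LinearMap.id (Coalgebra.comul a)) := by
  simpa [LinearMap.lTensor, LinearMap.rTensor] using (Coalgebra.coassoc_apply (R := k) a).symm

lemma cocomm3 (hcocomm : ∀ a : B,
      (TensorProduct.comm k B B) (Coalgebra.comul (R := k) a) = Coalgebra.comul (R := k) a)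
    (a : B) :
    dmSw (TensorProduct.map LinearMap.id (Coalgebra.comul (R := k)) (Coalgebra.comul a))
      = TensorProduct.map LinearMap.id (Coalgebra.comul (R := k)) (Coalgebra.comul a) := by
  rw [coassoc']
  generalize Coalgebra.comul (R := k) a = x
  induction x using TensorProduct.induction_on with
  | zero => simp only [map_zero]
  | tmul u v => simp [dmSw, hcocomm]
  | add x y hx hy => simp only [map_add, hx, hy]

lemma keyA (σ : B →ₗ[k] B) (p : B →ₗ[k] C →ₗ[k] k) :
    deltaR (k := k) ∘ₗ Grest σ p
      = TensorProduct.map (LinearMap.mul' k B) (Grest σ p)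
        ∘ₗ (TensorProduct.tensorTensorTensorComm k B ((B ⊗[k] B) ⊗[k] (C ⊗[k] C))
              B ((B ⊗[k] B) ⊗[k] (C ⊗[k] C))).toLinearMap
        ∘ₗ TensorProduct.map dmAa dmAb ∘ₗ dmQQ := by
  ext a1 a2 c1 c2 b1 b2 d1 d2
  simp only [TensorProduct.AlgebraTensorModule.curry_apply, TensorProduct.curry_apply,
    LinearMap.coe_restrictScalars, LinearMap.comp_apply, TensorProduct.map_tmul,
    LinearMap.id_coe, id_eq, LinearEquiv.coe_coe, Grest, pairT2, pairT, dmAa, dmAb, dmQQ, dmSw,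
    TensorProduct.tensorTensorTensorComm_tmul, TensorProduct.comm_tmul, TensorProduct.assoc_tmul,
    TensorProduct.lid_tmul, TensorProduct.lift.tmul, LinearMap.mul'_apply, deltaR,
    TensorProduct.assoc_symm_tmul, map_smul, TensorProduct.smul_tmul']
  rw [Bialgebra.comul_mul, mulmul]
  generalize Coalgebra.comul (R := k) a2 = w
  generalize Coalgebra.comul (R := k) b1 = z
  induction w using TensorProduct.induction_on with
  | zero => simp
  | tmul w1 w2 =>
    induction z using TensorProduct.induction_on with
    | zero => simp
    | tmul z1 z2 =>
      simp [TensorProduct.tensorTensorTensorComm_tmul, TensorProduct.comm_tmul,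
        TensorProduct.assoc_tmul, TensorProduct.assoc_symm_tmul, TensorProduct.lid_tmul,
        TensorProduct.lift.tmul, LinearMap.mul'_apply, TensorProduct.smul_tmul',
        TensorProduct.tmul_smul, mul_comm, mul_left_comm, smul_smul]
      rw [TensorProduct.smul_tmul, TensorProduct.smul_tmul']
    | add x y hx hy => simp only [map_add, tmul_add, add_tmul, smul_add, hx, hy]
  | add x y hx hy => simp only [map_add, tmul_add, add_tmul, smul_add, hx, hy]

lemma PFcomb (hcocomm : ∀ a : B,
      (TensorProduct.comm k B B) (Coalgebra.comul (R := k) a) = Coalgebra.comul (R := k) a) :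
    TensorProduct.map (dmAa (k := k) (B := B) (C := C)) dmAb
      ∘ₗ (dmQQ
      ∘ₗ TensorProduct.map
          (TensorProduct.map (Coalgebra.comul (R := k) (A := B))
            (Coalgebra.comul (R := k) (A := C)))
          (TensorProduct.map (Coalgebra.comul (R := k) (A := B))
            (Coalgebra.comul (R := k) (A := C))))
      = TensorProduct.map dmPf dmPf := by
  ext a c b d
  simp only [TensorProduct.AlgebraTensorModule.curry_apply, TensorProduct.curry_apply,
    LinearMap.coe_restrictScalars, LinearMap.comp_apply, TensorProduct.map_tmul,
    LinearMap.id_coe, id_eq, dmAa, dmAb, dmPf, dmQQ, LinearEquiv.coe_coe]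
  rw [cocomm3 hcocomm, ← coassoc' b]

lemma lemR (σ : B →ₗ[k] B) (p : B →ₗ[k] C →ₗ[k] k) :
    (TensorProduct.map (LinearMap.mul' k B) (doubleMul σ p))
        ∘ₗ (TensorProduct.tensorTensorTensorComm k B (B ⊗[k] C) B (B ⊗[k] C)).toLinearMap
        ∘ₗ TensorProduct.map (deltaR (k := k)) (deltaR (k := k))
      = TensorProduct.map (LinearMap.mul' k B) (Grest σ p)
        ∘ₗ (TensorProduct.tensorTensorTensorComm k B ((B ⊗[k] B) ⊗[k] (C ⊗[k] C))
              B ((B ⊗[k] B) ⊗[k] (C ⊗[k] C))).toLinearMap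
        ∘ₗ TensorProduct.map dmPf dmPf := by
  ext a c b d
  simp only [TensorProduct.AlgebraTensorModule.curry_apply, TensorProduct.curry_apply,
    LinearMap.coe_restrictScalars, LinearMap.comp_apply, TensorProduct.map_tmul,
    LinearMap.id_coe, id_eq, LinearEquiv.coe_coe, deltaR, dmPf]
  generalize Coalgebra.comul (R := k) a = w
  generalize Coalgebra.comul (R := k) b = z
  induction w using TensorProduct.induction_on with
  | zero => simp
  | tmul w1 w2 =>
    induction z using TensorProduct.induction_on with
    | zero => simp
    | tmul z1 z2 =>
      simp only [TensorProduct.map_tmul, TensorProduct.assoc_tmul,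
        TensorProduct.tensorTensorTensorComm_tmul, LinearMap.mul'_apply, doubleMul, Grest,
        LinearMap.comp_apply, LinearMap.id_coe, id_eq]
    | add x y hx hy => simp only [map_add, tmul_add, add_tmul, hx, hy]
  | add x y hx hy => simp only [map_add, tmul_add, add_tmul, hx, hy]

end AuxiliaryForDeltaRAlgHom

/-- If `B` is a cocommutative graded bialgebra with anti-automorphism
`σ` (and `C = B*` its graded dual), then `Δ_r : D(B) → B ⊗ D(B)`,
`Δ_r(a ⊗ α) = Σ a₁ ⊗ a₂ ⊗ α`, is an algebra homomorphism, where `D(B)` carries the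
double product and `B ⊗ D(B)` the tensor product algebra structure. -/
theorem deltaR_algHom
    (σ : B →ₗ[k] B)
    (hσmul : ∀ a b : B, σ (a * b) = σ b * σ a) (hσone : σ 1 = 1)
    (hσcomul : ∀ a : B,
      Coalgebra.comul (R := k) (σ a)
        = (TensorProduct.comm k B B) (TensorProduct.map σ σ (Coalgebra.comul (R := k) a)))
    (hσcounit : ∀ a : B, Coalgebra.counit (R := k) (σ a) = Coalgebra.counit (R := k) a)
    -- `B` is cocommutative
    (hcocomm : ∀ a : B,
      (TensorProduct.comm k B B) (Coalgebra.comul (R := k) a) = Coalgebra.comul (R := k) a)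
    (p : B →ₗ[k] C →ₗ[k] k)
    (hpmulC : ∀ (a : B) (γ δ : C),
      pairT p (a ⊗ₜ (γ * δ)) = pairT2 p ((Coalgebra.comul (R := k) a) ⊗ₜ (γ ⊗ₜ δ)))
    (hpmulB : ∀ (a b : B) (γ : C),
      pairT p ((a * b) ⊗ₜ γ) = pairT2 p ((a ⊗ₜ b) ⊗ₜ (Coalgebra.comul (R := k) γ)))
    (hpone : ∀ γ : C, pairT p ((1 : B) ⊗ₜ γ) = Coalgebra.counit (R := k) γ)
    (hpone' : ∀ a : B, pairT p (a ⊗ₜ (1 : C)) = Coalgebra.counit (R := k) a) :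
    -- `Δ_r` is multiplicative: `Δ_r (x · y) = Δ_r x · Δ_r y`, where the product on
    -- `B ⊗ D(B)` is `(b ⊗ d)(b' ⊗ d') = b b' ⊗ d d'`
    (deltaR (k := k) (B := B) (C := C) ∘ₗ doubleMul σ p
      = (TensorProduct.map (LinearMap.mul' k B) (doubleMul σ p))
        ∘ₗ (TensorProduct.tensorTensorTensorComm k B (B ⊗[k] C) B (B ⊗[k] C)).toLinearMap
        ∘ₗ TensorProduct.map (deltaR (k := k)) (deltaR (k := k)))
    -- and `Δ_r` preserves the unit `1 ⊗ 1` of `D(B)`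
    ∧ deltaR (k := k) ((1 : B) ⊗ₜ (1 : C)) = (1 : B) ⊗ₜ ((1 : B) ⊗ₜ (1 : C)) := by
  constructor
  · have hdm : doubleMul σ p = Grest σ p
        ∘ₗ TensorProduct.map
            (TensorProduct.map (Coalgebra.comul (R := k) (A := B))
              (Coalgebra.comul (R := k) (A := C)))
            (TensorProduct.map (Coalgebra.comul (R := k) (A := B))
              (Coalgebra.comul (R := k) (A := C))) := rfl
    rw [lemR σ p, ← PFcomb hcocomm, hdm, ← LinearMap.comp_assoc, keyA σ p]
    simp only [LinearMap.comp_assoc]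
  · simp [deltaR, Algebra.TensorProduct.one_def]
end

section
/- Let ρ be a Rouquier core for (p,w) and I the set of partitions with p-core ρ and p-weight w. Then the set I_res of p-restricted partitions in I equals the set of λ ∈ I whose p-quotient [λ⁰,…,λ^{p−1}] satisfies λ^{p−1} = ∅, and the set I_reg of p-regular partitions in I equals the set of λ ∈ I whose p-quotient satisfies λ⁰ = ∅. -/
/-!
Statement 8: Let `ρ` be a Rouquier core for `(p, w)` and `I` the set of partitions
with `p`-core `ρ` and `p`-weight `w`.  Then the set `I_res` of `p`-restricted
partitions in `I` equals the set of `λ ∈ I` whose `p`-quotient `[λ⁰,…,λ^{p-1}]`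
satisfies `λ^{p-1} = ∅`, and the set `I_reg` of `p`-regular partitions in `I` equals
the set of `λ ∈ I` whose `p`-quotient satisfies `λ⁰ = ∅`.
-/

/-- A partition, encoded as a weakly decreasing, eventually-zero function giving its
parts (`l i` is the `(i+1)`-st part). -/
def IsPartition (l : ℕ → ℕ) : Prop := Antitone l ∧ ∃ N, ∀ i, N ≤ i → l i = 0

/-- The `i`-th beta number (0-indexed) of `l` on an abacus with `m` beads:
`β i = l i + m - 1 - i`. -/
def beta (m : ℕ) (l : ℕ → ℕ) (i : ℕ) : ℕ := l i + (m - 1 - i)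

/-- The set of beta numbers (bead positions) of `l` on an abacus with `m` beads;
position `b` lies on runner `b % p` in row `b / p`. -/
def betaSet (m : ℕ) (l : ℕ → ℕ) : Finset ℕ := (Finset.range m).image (beta m l)

/-- The number of beads of `l` on runner `s` of the abacus with `p` runners and `m`
beads. -/
def runnerCount (p m : ℕ) (l : ℕ → ℕ) (s : ℕ) : ℕ :=
  ((betaSet m l).filter fun b => b % p = s).card

/-- The `p`-weight of `l`: the total number of one-row upward bead moves (i.e. rim
`p`-hook removals) needed to push all beads fully up their runners. -/
def pweight (p m : ℕ) (l : ℕ → ℕ) : ℕ :=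
  (∑ b ∈ betaSet m l, b / p) - ∑ s ∈ Finset.range p, (runnerCount p m l s).choose 2

/-- `l` is a `p`-core: no rim `p`-hook can be removed (all beads are fully up). -/
def IsCore (p m : ℕ) (l : ℕ → ℕ) : Prop := pweight p m l = 0

/-- `l` has `p`-core `ρ` (on the abacus with `m` beads): `ρ` is a core and is obtained
from `l` by sliding all beads fully up their runners, i.e. runner counts agree. -/
def HasCore (p m : ℕ) (l ρ : ℕ → ℕ) : Prop :=
  IsCore p m ρ ∧ ∀ s, runnerCount p m l s = runnerCount p m ρ s

/-- The set of rows occupied by beads of `l` on runner `s`. -/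
def runnerRows (p m : ℕ) (l : ℕ → ℕ) (s : ℕ) : Finset ℕ :=
  ((betaSet m l).filter fun b => b % p = s).image fun b => b / p

/-- The `j`-th part (0-indexed) of the `s`-th partition `λ^s` in the `p`-quotient of
`l`: the number of vacant positions above the `(j+1)`-st lowest bead on runner `s`. -/
def pquot (p m : ℕ) (l : ℕ → ℕ) (s j : ℕ) : ℕ :=
  let c := runnerCount p m l s
  if j < c then ((runnerRows p m l s).sort (· ≤ ·)).getD (c - 1 - j) 0 - (c - 1 - j)
  else 0

/-- The cells of the Young diagram of a partition (row, column), 0-indexed. -/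
def cells (l : ℕ → ℕ) : Set (ℕ × ℕ) := {q | q.2 < l q.1}

/-- `ρ` is a Rouquier core for `(p, w)` (on the abacus with `m` beads): it is a
`p`-core with at least `w - 1` more beads on runner `i` than on runner `i - 1`, for
`i = 1, …, p-1`. -/
def IsRouquierCore (p m w : ℕ) (ρ : ℕ → ℕ) : Prop :=
  IsCore p m ρ ∧ ∀ i, 1 ≤ i → i < p →
    runnerCount p m ρ (i - 1) + (w - 1) ≤ runnerCount p m ρ i

/-- A partition is `p`-regular if it does not have `p` (or more) identical nonzero
parts. -/
def PRegular (p : ℕ) (l : ℕ → ℕ) : Prop := ∀ i, l (i + (p - 1)) = l i → l i = 0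

/-- A partition is `p`-restricted if its conjugate is `p`-regular; equivalently,
successive parts differ by less than `p`. -/
def PRestricted (p : ℕ) (l : ℕ → ℕ) : Prop := ∀ i, l i - l (i + 1) < p

/-!
On the abacus, `λ` is `p`-restricted iff no bead is preceded by `p` empty positions, and
`p`-regular iff no `p` consecutive beads are preceded by an empty position. Runner `s` carries
the quotient partition `λ^s`, whose size is the number of pairs (bead, empty position above it on
the same runner), and these sizes add up to the weight `w`. If runner `s` has `b_s` beads, a bead
in row `r` of it satisfies `r < b_s + |λ^s|`, and an empty row `g` of it satisfies
`b_s ≤ g + |λ^s|`. Since a Rouquier core forces `b_s + (w - 1) ≤ b_t` for `s < t` while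
`|λ^s| + |λ^t| ≤ w`, every bead of an earlier runner lies weakly above every empty position of a
later runner. With the runners separated in this way, restrictedness (regularity) fails exactly
when the last (first) runner has an empty position above one of its beads, that is, when
`λ^{p-1}` (`λ⁰`) is nonempty.
-/

open Finset

namespace Finset

/-- The size of the quotient partition carried by a runner whose beads occupy the rows `Q`. -/
def displacement (Q : Finset ℕ) : ℕ := ∑ q ∈ Q, #(range q \ Q)

theorem sum_id_eq_choose_add_displacement (Q : Finset ℕ) :
    ∑ q ∈ Q, q = (#Q).choose 2 + Q.displacement := by
  induction Q using Finset.induction_on_max with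
  | empty => simp [displacement]
  | insert a s hlt ih =>
    have ha : a ∉ s := fun h => (hlt a h).false
    have hsub : s ⊆ range a := fun x hx => mem_range.2 (hlt x hx)
    have hrows : ∀ q ∈ s, #(range q \ insert a s) = #(range q \ s) := fun q hq => by
      have : a ∉ range q \ s := fun h => (hlt q hq).not_ge (mem_range.1 (mem_sdiff.1 h).1).le
      rw [sdiff_insert, erase_eq_of_notMem this]
    have htop : #(range a \ insert a s) = a - #s := by
      rw [sdiff_insert, erase_eq_of_notMem (by simp), card_sdiff_of_subset hsub, card_range]
    have hcard : #s ≤ a := by simpa using card_le_card hsub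
    have hchoose : (#s + 1).choose 2 = (#s).choose 2 + #s := by
      rw [Nat.choose_succ_succ', Nat.choose_one_right, add_comm]
    rw [displacement, sum_insert ha, sum_insert ha, card_insert_of_notMem ha, htop,
      sum_congr rfl hrows, ih, hchoose, ← displacement]
    omega

theorem lt_card_add_displacement {Q : Finset ℕ} {q : ℕ} (hq : q ∈ Q) :
    q < #Q + Q.displacement := by
  have hbelow : #(range q ∩ Q) < #Q :=
    card_lt_card ⟨inter_subset_right, fun h => by simpa using h hq⟩
  have hgaps : #(range q \ Q) ≤ Q.displacement :=
    single_le_sum (f := fun q => #(range q \ Q)) (fun _ _ => Nat.zero_le _) hq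
  have := card_sdiff_add_card_inter (range q) Q
  rw [card_range] at this
  omega

theorem card_le_add_displacement {Q : Finset ℕ} {g : ℕ} (hg : g ∉ Q) :
    #Q ≤ g + Q.displacement := by
  have hbelow : #(Q.filter (· < g)) ≤ g := by
    simpa using card_le_card (s := Q.filter (· < g)) (t := range g) (fun x hx => by simp_all)
  have habove : #(Q.filter fun q => ¬ q < g) ≤ Q.displacement := by
    rw [card_eq_sum_ones]
    refine (sum_le_sum fun q hq => ?_).trans
      (sum_le_sum_of_subset (f := fun q => #(range q \ Q)) (filter_subset _ Q))
    obtain ⟨hqQ, hqg⟩ := mem_filter.1 hq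
    have : g < q := lt_of_le_of_ne (not_lt.1 hqg) fun h => hg (h ▸ hqQ)
    exact card_pos.2 ⟨g, by simp [this, hg]⟩
  have := card_filter_add_card_filter_not (s := Q) (· < g)
  omega

theorem displacement_range (n : ℕ) : (range n).displacement = 0 :=
  sum_eq_zero fun q hq => by
    rw [card_eq_zero, sdiff_eq_empty_iff_subset]
    exact range_subset_range.2 (mem_range.1 hq).le

theorem displacement_eq_zero_iff {Q : Finset ℕ} : Q.displacement = 0 ↔ Q = range #Q := by
  refine ⟨fun h => eq_of_subset_of_card_le (fun q hq => ?_) (by simp),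
    fun h => h ▸ displacement_range _⟩
  simpa [h] using lt_card_add_displacement hq

theorem exists_notMem_add_one_mem {Q : Finset ℕ} (h : Q ≠ range #Q) : ∃ g ∉ Q, g + 1 ∈ Q := by
  obtain ⟨r, hr, hgaps⟩ := exists_ne_zero_of_sum_ne_zero (mt displacement_eq_zero_iff.1 h)
  obtain ⟨g, hg⟩ := card_ne_zero.1 hgaps
  obtain ⟨hgr, hg⟩ := mem_sdiff.1 hg
  obtain ⟨n, hn, hn1⟩ := Nat.exists_not_and_succ_of_not_zero_of_exists (p := fun n => g + n ∈ Q)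
    (by simpa using hg) ⟨r - g, by simpa [Nat.add_sub_cancel' (mem_range.1 hgr).le] using hr⟩
  exact ⟨g + n, hn, hn1⟩

theorem forall_getD_sort_le_iff {Q : Finset ℕ} :
    (∀ k < #Q, (Q.sort (· ≤ ·)).getD k 0 ≤ k) ↔ Q = range #Q := by
  refine ⟨fun h => eq_of_subset_of_card_le (fun q hq => ?_) (by simp), fun h k hk => ?_⟩
  · obtain ⟨⟨k, hk⟩, rfl⟩ := List.mem_iff_get.1 ((mem_sort (· ≤ ·)).2 hq)
    have hk' : k < #Q := by simpa using hk
    have hle := h k hk'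
    rw [List.getD_eq_getElem _ _ hk] at hle
    exact mem_range.2 (hle.trans_lt hk')
  · rw [h, sort_range, card_range] at *
    simp [hk]

theorem card_filter_lt_add_of_forall_mem {B : Finset ℕ} {a n : ℕ}
    (h : ∀ k < n, a + k ∈ B) : #(B.filter (· < a + n)) = #(B.filter (· < a)) + n := by
  have hsplit : B.filter (· < a + n) = B.filter (· < a) ∪ Ico a (a + n) := by
    ext y
    simp only [mem_filter, mem_union, mem_Ico]
    refine ⟨fun ⟨hy, hlt⟩ => ?_, ?_⟩
    · by_cases hya : y < a
      exacts [Or.inl ⟨hy, hya⟩, Or.inr ⟨not_lt.1 hya, hlt⟩]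
    · rintro (⟨hy, hya⟩ | ⟨hay, hlt⟩)
      · exact ⟨hy, by omega⟩
      · exact ⟨by simpa [Nat.add_sub_cancel' hay] using h (y - a) (by omega), hlt⟩
  have hdisj : Disjoint (B.filter (· < a)) (Ico a (a + n)) :=
    disjoint_left.2 fun y hy hy' => by simp only [mem_filter, mem_Ico] at hy hy'; omega
  rw [hsplit, card_union_of_disjoint hdisj, Nat.card_Ico, Nat.add_sub_cancel_left]

end Finset

section Abacus

variable {p m : ℕ} {l : ℕ → ℕ}

theorem strictAntiOn_beta (hl : Antitone l) : StrictAntiOn (beta m l) (Set.Iio m) :=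
  fun i hi j hj hij => by
    have := hl hij.le
    simp only [Set.mem_Iio] at hi hj
    unfold beta; omega

theorem mem_betaSet {b : ℕ} : b ∈ betaSet m l ↔ ∃ i < m, beta m l i = b := by
  simp [betaSet]

theorem card_filter_lt_beta (hl : Antitone l) {i : ℕ} (hi : i < m) :
    #((betaSet m l).filter (· < beta m l i)) = m - 1 - i := by
  have hanti := strictAntiOn_beta (m := m) hl
  have : (betaSet m l).filter (· < beta m l i) = (Ioo i m).image (beta m l) := by
    ext b
    simp only [betaSet, filter_image, mem_image, mem_filter, mem_range, mem_Ioo]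
    refine exists_congr fun j => and_congr_left fun hj => ?_
    subst hj
    exact ⟨fun ⟨hj, h⟩ => ⟨(hanti.lt_iff_gt hj hi).1 h, hj⟩,
      fun ⟨h, hj⟩ => ⟨hj, (hanti.lt_iff_gt hj hi).2 h⟩⟩
  rw [this, card_image_of_injOn (hanti.injOn.mono fun j hj => (mem_Ioo.1 hj).2), Nat.card_Ioo]
  omega

theorem filter_lt_beta_eq_range_iff (hl : Antitone l) {i : ℕ} (hi : i < m) :
    (betaSet m l).filter (· < beta m l i) = range (beta m l i) ↔ l i = 0 := by
  have hsub : (betaSet m l).filter (· < beta m l i) ⊆ range (beta m l i) :=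
    fun b hb => mem_range.2 (mem_filter.1 hb).2
  rw [← (eq_iff_card_le_of_subset hsub), card_filter_lt_beta hl hi, card_range, beta]
  omega

theorem injOn_div_of_mod_eq (s : ℕ) : Set.InjOn (· / p) {b | b % p = s} :=
  fun a ha b hb (hab : a / p = b / p) => by
    rw [← Nat.div_add_mod a p, ← Nat.div_add_mod b p, hab, ha, hb]

theorem card_runnerRows (s : ℕ) : #(runnerRows p m l s) = runnerCount p m l s :=
  card_image_of_injOn fun _ ha _ hb =>
    injOn_div_of_mod_eq s (mem_filter.1 ha).2 (mem_filter.1 hb).2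

theorem exists_eq_mul_add_lt (hp : 0 < p) (b : ℕ) : ∃ q s, s < p ∧ b = p * q + s :=
  ⟨b / p, b % p, Nat.mod_lt b hp, (Nat.div_add_mod b p).symm⟩

theorem mem_runnerRows (hp : 0 < p) {s q : ℕ} (hs : s < p) :
    q ∈ runnerRows p m l s ↔ p * q + s ∈ betaSet m l := by
  simp only [runnerRows, mem_image, mem_filter]
  refine ⟨?_, fun h => ⟨p * q + s, ⟨h, ?_⟩, ?_⟩⟩
  · rintro ⟨b, ⟨hb, rfl⟩, rfl⟩
    rwa [Nat.div_add_mod]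
  · rw [Nat.mul_add_mod, Nat.mod_eq_of_lt hs]
  · rw [Nat.mul_add_div hp, Nat.div_eq_of_lt hs, add_zero]

theorem pweight_eq_sum_displacement (hp : 0 < p) :
    pweight p m l = ∑ s ∈ range p, (runnerRows p m l s).displacement := by
  have hrows : ∑ b ∈ betaSet m l, b / p = ∑ s ∈ range p, ∑ q ∈ runnerRows p m l s, q := by
    rw [← sum_fiberwise_of_maps_to (g := (· % p)) fun b _ => mem_range.2 (Nat.mod_lt b hp)]
    refine sum_congr rfl fun s _ => ?_
    rw [runnerRows, sum_image fun a ha b hb => ?_]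
    exact injOn_div_of_mod_eq s (mem_filter.1 ha).2 (mem_filter.1 hb).2
  simp only [pweight, hrows, sum_id_eq_choose_add_displacement, sum_add_distrib, card_runnerRows,
    Nat.add_sub_cancel_left]

theorem pquot_eq_zero_iff (s : ℕ) :
    (∀ j, pquot p m l s j = 0) ↔ runnerRows p m l s = range #(runnerRows p m l s) := by
  rw [← forall_getD_sort_le_iff, card_runnerRows]
  dsimp only [pquot]
  set c := runnerCount p m l s
  constructor
  · intro h k hk
    have := h (c - 1 - k)
    rw [if_pos (by omega), show c - 1 - (c - 1 - k) = k by omega] at this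
    omega
  · intro h j
    split_ifs with hj
    · have := h (c - 1 - j) (by omega)
      omega
    · rfl

def AbacusRestricted (p : ℕ) (B : Finset ℕ) : Prop :=
  ∀ b ∈ B, p ≤ b → ∃ c ∈ B, c < b ∧ b ≤ c + p

def AbacusRegular (p : ℕ) (B : Finset ℕ) : Prop :=
  ∀ x y, (∀ k < p, x + k ∈ B) → y < x → y ∈ B

theorem pRestricted_iff_abacusRestricted (hp : 0 < p) (hl : Antitone l)
    (hm : ∀ i, m ≤ i → l i = 0) : PRestricted p l ↔ AbacusRestricted p (betaSet m l) := by
  have hanti := strictAntiOn_beta (m := m) hl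
  constructor
  · intro hres b hb hpb
    obtain ⟨i, hi, rfl⟩ := mem_betaSet.1 hb
    have := hres i
    by_cases hi1 : i + 1 < m
    · refine ⟨beta m l (i + 1), mem_betaSet.2 ⟨_, hi1, rfl⟩, hanti hi hi1 (by omega), ?_⟩
      unfold beta; omega
    · have := hm (i + 1) (by omega)
      unfold beta at hpb; omega
  · intro hR i
    by_contra! h
    have hi : i < m := by
      by_contra hi
      rw [hm i (by omega)] at h
      omega
    obtain ⟨c, hc, hcb, hbc⟩ := hR _ (mem_betaSet.2 ⟨i, hi, rfl⟩) (by unfold beta; omega)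
    obtain ⟨j, hj, rfl⟩ := mem_betaSet.1 hc
    have hij : i < j := (hanti.lt_iff_gt hj hi).1 hcb
    have : beta m l j ≤ beta m l (i + 1) := (hanti.le_iff_ge hj (by omega : i + 1 < m)).2 hij
    unfold beta at *
    omega

theorem pRegular_iff_abacusRegular (hp : 0 < p) (hl : Antitone l)
    (hm : ∀ i, m ≤ i → l i = 0) : PRegular p l ↔ AbacusRegular p (betaSet m l) := by
  constructor
  · intro hreg x y hwin hyx
    obtain ⟨i, hi, hxi⟩ := mem_betaSet.1 (hwin (p - 1) (by omega))
    obtain ⟨j, hj, hxj⟩ := mem_betaSet.1 (hwin 0 hp)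
    have hcount := card_filter_lt_add_of_forall_mem (B := betaSet m l) (a := x) (n := p - 1)
      fun k hk => hwin k (by omega)
    rw [← hxi, card_filter_lt_beta hl hi, ← add_zero x, ← hxj, card_filter_lt_beta hl hj]
      at hcount
    have hji : j = i + (p - 1) := by omega
    have hlij : l i = l j := by unfold beta at hxi hxj; omega
    have hlj : l j = 0 := hlij ▸ hreg i (by rw [← hji, hlij])
    have hy : y ∈ range (beta m l j) := mem_range.2 (by omega)
    rw [← (filter_lt_beta_eq_range_iff hl hj).2 hlj] at hy
    exact (mem_filter.1 hy).1
  · intro hG i hi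
    by_cases hm' : m ≤ i + (p - 1)
    · rw [← hi, hm _ hm']
    set j := i + (p - 1)
    have hconst : ∀ k ≤ p - 1, l (j - k) = l j := fun k hk =>
      le_antisymm (hi ▸ hl (by omega)) (hl (by omega))
    have hwin : ∀ k < p, beta m l j + k ∈ betaSet m l := fun k hk =>
      mem_betaSet.2 ⟨j - k, by omega, by have := hconst k (by omega); unfold beta; omega⟩
    have hbelow : (betaSet m l).filter (· < beta m l j) = range (beta m l j) := by
      ext y
      simp only [mem_filter, mem_range]
      exact ⟨And.right, fun hy => ⟨hG _ y hwin hy, hy⟩⟩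
    rw [← hi]
    exact (filter_lt_beta_eq_range_iff hl (by omega)).1 hbelow

def RunnersSeparated (p m : ℕ) (l : ℕ → ℕ) : Prop :=
  ∀ s t, s < t → t < p → ∀ r ∈ runnerRows p m l s, ∀ g ∉ runnerRows p m l t, r ≤ g

theorem IsRouquierCore.runnerCount_add_le {w : ℕ} {ρ : ℕ → ℕ} (hρ : IsRouquierCore p m w ρ)
    {s t : ℕ} (hst : s < t) (ht : t < p) :
    runnerCount p m ρ s + (w - 1) ≤ runnerCount p m ρ t := by
  induction t, hst using Nat.le_induction with
  | base => simpa using hρ.2 (s + 1) (by omega) ht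
  | succ t hst ih =>
    have hstep := hρ.2 (t + 1) (by omega) ht
    rw [Nat.add_sub_cancel] at hstep
    have := ih (by omega)
    omega

theorem IsRouquierCore.runnersSeparated {w : ℕ} {ρ : ℕ → ℕ} (hρ : IsRouquierCore p m w ρ)
    (hp : 0 < p) (hw : 0 < w) (hcore : HasCore p m l ρ) (hwt : pweight p m l = w) :
    RunnersSeparated p m l := by
  intro s t hst ht r hr g hg
  have hcount : #(runnerRows p m l s) + (w - 1) ≤ #(runnerRows p m l t) := by
    simpa only [card_runnerRows, hcore.2] using hρ.runnerCount_add_le hst ht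
  have hdisp : (runnerRows p m l s).displacement + (runnerRows p m l t).displacement ≤ w := by
    rw [← hwt, pweight_eq_sum_displacement hp,
      ← sum_pair (f := fun u => (runnerRows p m l u).displacement) hst.ne]
    refine sum_le_sum_of_subset fun u hu => ?_
    rw [mem_insert, mem_singleton] at hu
    exact mem_range.2 (by omega)
  have := lt_card_add_displacement hr
  have := card_le_add_displacement hg
  omega

theorem RunnersSeparated.abacusRestricted_iff (hsep : RunnersSeparated p m l) (hp : 0 < p) :
    AbacusRestricted p (betaSet m l) ↔
      runnerRows p m l (p - 1) = range #(runnerRows p m l (p - 1)) := by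
  have hlast : p - 1 < p := by omega
  constructor
  · intro hR
    by_contra hQ
    obtain ⟨g, hg, hg1⟩ := exists_notMem_add_one_mem hQ
    obtain ⟨c, hc, hcb, hbc⟩ :=
      hR _ ((mem_runnerRows hp hlast).1 hg1) (by rw [mul_add_one]; omega)
    obtain ⟨q, s, hs, rfl⟩ := exists_eq_mul_add_lt hp c
    have hq := (mem_runnerRows hp hs).2 hc
    rw [mul_add_one] at hcb hbc
    have hgq : g < q + 1 := Nat.lt_of_mul_lt_mul_left (a := p) (by rw [mul_add_one]; omega)
    have hqg : q < g + 2 := Nat.lt_of_mul_lt_mul_left (a := p) (by rw [mul_add]; omega)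
    rcases (by omega : q = g ∨ q = g + 1) with rfl | rfl
    · obtain rfl : s = p - 1 := by omega
      exact hg hq
    · rw [mul_add_one] at hcb
      have := hsep s (p - 1) (by omega) hlast (g + 1) hq g hg
      omega
  · intro hQ b hb hpb
    obtain ⟨r, s, hs, rfl⟩ := exists_eq_mul_add_lt hp b
    have hr := (mem_runnerRows hp hs).2 hb
    obtain ⟨r, rfl⟩ := Nat.exists_eq_add_one_of_ne_zero (by rintro rfl; omega : r ≠ 0)
    have hr1 : r ∈ runnerRows p m l (p - 1) := by
      rcases (by omega : s = p - 1 ∨ s < p - 1) with rfl | hs'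
      · rw [hQ, mem_range] at hr ⊢
        omega
      · by_contra h
        have := hsep s (p - 1) hs' hlast (r + 1) hr r h
        omega
    refine ⟨p * r + (p - 1), (mem_runnerRows hp hlast).1 hr1, ?_, ?_⟩ <;>
      rw [mul_add_one] <;> omega

theorem RunnersSeparated.abacusRegular_iff (hsep : RunnersSeparated p m l) (hp : 0 < p) :
    AbacusRegular p (betaSet m l) ↔ runnerRows p m l 0 = range #(runnerRows p m l 0) := by
  constructor
  · intro hG
    by_contra hQ
    obtain ⟨g, hg, hg1⟩ := exists_notMem_add_one_mem hQ
    have hwin : ∀ k < p, p * g + 1 + k ∈ betaSet m l := by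
      intro k hk
      rcases (by omega : k = p - 1 ∨ k < p - 1) with rfl | hk'
      · have := (mem_runnerRows hp hp).1 hg1
        rwa [mul_add_one, show p * g + p + 0 = p * g + 1 + (p - 1) by omega] at this
      · rw [show p * g + 1 + k = p * g + (k + 1) by omega, ← mem_runnerRows hp (by omega)]
        by_contra h
        have := hsep 0 (k + 1) (by omega) (by omega) (g + 1) hg1 g h
        omega
    have := hG _ (p * g + 0) hwin (by omega)
    exact hg ((mem_runnerRows hp hp).2 this)
  · intro hQ x y hwin hyx
    obtain ⟨R, hxR, hRx⟩ : ∃ R, x ≤ p * R ∧ p * R < x + p := by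
      have := Nat.div_add_mod (x + p - 1) p
      have := Nat.mod_lt (x + p - 1) hp
      exact ⟨(x + p - 1) / p, by omega, by omega⟩
    have hR : R ∈ runnerRows p m l 0 := by
      have := hwin (p * R - x) (by omega)
      rwa [show x + (p * R - x) = p * R + 0 by omega, ← mem_runnerRows hp hp] at this
    obtain ⟨q, t, ht, rfl⟩ := exists_eq_mul_add_lt hp y
    rw [← mem_runnerRows hp ht]
    have hqR : q < R := Nat.lt_of_mul_lt_mul_left (a := p) (by omega)
    by_contra hq
    rcases Nat.eq_zero_or_pos t with rfl | ht0
    · rw [hQ, mem_range] at hR hq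
      omega
    · have := hsep 0 t ht0 ht R hR q hq
      omega

end Abacus

theorem rouquier_regular_restricted_general
    (p m w : ℕ) (hp : 0 < p) (hw : 0 < w)
    (ρ : ℕ → ℕ)
    (hrouq : IsRouquierCore p m w ρ)
    (lam : ℕ → ℕ) (hlam : IsPartition lam) (hlamm : ∀ i, m ≤ i → lam i = 0)
    (hcore : HasCore p m lam ρ) (hwt : pweight p m lam = w) :
    (PRestricted p lam ↔ ∀ j, pquot p m lam (p - 1) j = 0)
    ∧ (PRegular p lam ↔ ∀ j, pquot p m lam 0 j = 0) := by
  have hsep := hrouq.runnersSeparated hp hw hcore hwt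
  rw [pquot_eq_zero_iff, pquot_eq_zero_iff, ← hsep.abacusRestricted_iff hp,
    ← hsep.abacusRegular_iff hp]
  exact ⟨pRestricted_iff_abacusRestricted hp hlam.1 hlamm,
    pRegular_iff_abacusRegular hp hlam.1 hlamm⟩

/-- For `λ` with Rouquier core `ρ` and weight `w`:
`λ` is `p`-restricted iff `λ^{p-1} = ∅`, and `λ` is `p`-regular iff `λ⁰ = ∅`. -/
theorem rouquier_regular_restricted
    (p m w : ℕ) (hp : 0 < p) (hw : 0 < w)
    (ρ : ℕ → ℕ) (hρ : IsPartition ρ) (hρm : ∀ i, m ≤ i → ρ i = 0)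
    (hrouq : IsRouquierCore p m w ρ)
    (lam : ℕ → ℕ) (hlam : IsPartition lam) (hlamm : ∀ i, m ≤ i → lam i = 0)
    (hcore : HasCore p m lam ρ) (hwt : pweight p m lam = w) :
    (PRestricted p lam ↔ ∀ j, pquot p m lam (p - 1) j = 0)
    ∧ (PRegular p lam ↔ ∀ j, pquot p m lam 0 j = 0) :=
  rouquier_regular_restricted_general p m w hp hw ρ hrouq lam hlam hlamm hcore hwt
end

section
/- Let μ be a partition of p-weight w with p-core the Rouquier core ρ, such that μ is not in Θ_w (i.e., its abacus presentation is not obtained from ρ by moving beads only up/down the rightmost runner). Then for every θ ∈ Θ_w, μ does not dominate θ. -/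
namespace S9
open Finset

def tri (n : ℕ) : ℕ := ∑ i ∈ range n, i

lemma tri_succ (n : ℕ) : tri (n+1) = tri n + n := Finset.sum_range_succ _ _

lemma tri_add (b t : ℕ) : tri (b + t) = tri b + t*b + tri t := by
  induction t with
  | zero => simp [tri]
  | succ t ih =>
      rw [← Nat.add_assoc, tri_succ, tri_succ, ih]; ring

lemma tri_pred (n : ℕ) (h : 0 < n) : tri n = tri (n-1) + (n-1) := by
  obtain ⟨k, rfl⟩ := Nat.exists_eq_succ_of_ne_zero (Nat.pos_iff_ne_zero.1 h)
  simp [tri_succ]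

lemma tri_mono : Monotone tri := by
  intro a b hab
  unfold tri
  exact Finset.sum_le_sum_of_subset (Finset.range_subset_range.2 hab)

lemma choose_two_eq_tri (n : ℕ) : n.choose 2 = tri n := by
  rw [Nat.choose_two_right, tri, Finset.sum_range_id]

lemma tri_le_sum (T : Finset ℕ) : tri T.card ≤ ∑ x ∈ T, x := by
  induction T using Finset.strongInduction with
  | _ T ih =>
    rcases T.eq_empty_or_nonempty with rfl | hne
    · simp [tri]
    · set x := T.max' hne with hx
      have hxm : x ∈ T := T.max'_mem hne
      have hsubT : T ⊆ range (x+1) := by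
        intro y hy
        simpa using Nat.lt_succ_of_le (T.le_max' y hy)
      have hcard : T.card ≤ x + 1 := by
        simpa using Finset.card_le_card hsubT
      have hE : (T.erase x).card = T.card - 1 := Finset.card_erase_of_mem hxm
      have hsum : ∑ y ∈ T, y = x + ∑ y ∈ T.erase x, y :=
        (Finset.add_sum_erase T id hxm).symm
      have ihe := ih (T.erase x) (Finset.erase_ssubset hxm)
      rw [hE] at ihe
      have hpos : 0 < T.card := Finset.card_pos.2 hne
      have hT1 : tri T.card = tri (T.card - 1) + (T.card - 1) := tri_pred _ hpos
      omega

lemma eq_range_of_sum_eq (T : Finset ℕ) (h : ∑ x ∈ T, x = tri T.card) :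
    T = range T.card := by
  rcases T.eq_empty_or_nonempty with rfl | hne
  · simp
  set x := T.max' hne with hx
  have hxm : x ∈ T := T.max'_mem hne
  have hsubT : T ⊆ range (x+1) := by
    intro y hy; simpa using Nat.lt_succ_of_le (T.le_max' y hy)
  have hcard : T.card ≤ x + 1 := by simpa using Finset.card_le_card hsubT
  have hE : (T.erase x).card = T.card - 1 := Finset.card_erase_of_mem hxm
  have hsum : ∑ y ∈ T, y = x + ∑ y ∈ T.erase x, y :=
    (Finset.add_sum_erase T id hxm).symm
  have hle := tri_le_sum (T.erase x)
  rw [hE] at hle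
  have hpos : 0 < T.card := Finset.card_pos.2 hne
  have htri : tri T.card = tri (T.card - 1) + (T.card - 1) := tri_pred _ hpos
  have hxle : x ≤ T.card - 1 := by omega
  have : T ⊆ range T.card := by
    intro y hy
    have := T.le_max' y hy
    simp only [Finset.mem_range]
    omega
  exact Finset.eq_of_subset_of_card_le this (by simp)

-- each term ≤ bound
lemma tri_le_mul (n : ℕ) : tri n ≤ n * (n-1) := by
  unfold tri
  calc ∑ i ∈ range n, i ≤ ∑ _i ∈ range n, (n-1) :=
        Finset.sum_le_sum (fun i hi => by simp at hi; omega)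
    _ = n * (n-1) := by simp [Finset.sum_const, smul_eq_mul]

lemma tri_sub_le (a k : ℕ) (hk : k ≤ a) : tri a ≤ tri (a - k) + k * (a - 1) := by
  obtain ⟨b, rfl⟩ : ∃ b, a = b + k := ⟨a - k, by omega⟩
  have hb : b + k - k = b := by omega
  rw [hb, tri_add]
  have h1 : tri k ≤ k * (k - 1) := tri_le_mul k
  rcases Nat.eq_zero_or_pos k with rfl | hkpos
  · simp [tri]
  · have h2 : k * b + k * (k-1) = k * (b + k - 1) := by
      rw [← Nat.mul_add]
      congr 1
      omega
    omega

lemma tri_gap (b a : ℕ) (h : b ≤ a) : tri b + (a - b) * b ≤ tri a := by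
  obtain ⟨t, rfl⟩ : ∃ t, a = b + t := ⟨a - b, by omega⟩
  rw [tri_add]
  have : b + t - b = t := by omega
  rw [this]
  omega


section Beta
variable {m : ℕ} {l : ℕ → ℕ}

lemma beta_lt (hl : Antitone l) {i j : ℕ} (hij : i < j) (hj : j < m) :
    beta m l j < beta m l i := by
  have h1 : l j ≤ l i := hl (Nat.le_of_lt hij)
  have h2 : m - 1 - j < m - 1 - i := by omega
  unfold beta
  omega

lemma beta_injOn (hl : Antitone l) : Set.InjOn (beta m l) (Finset.range m) := by
  intro a ha b hb hab
  simp only [Finset.coe_range, Set.mem_Iio] at ha hb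
  by_contra hne
  rcases Nat.lt_or_ge a b with h | h
  · exact absurd hab (Nat.ne_of_gt (beta_lt hl h hb))
  · have : b < a := by omega
    exact absurd hab (Nat.ne_of_gt (beta_lt hl this ha)).symm

lemma card_betaSet (hl : Antitone l) : (betaSet m l).card = m := by
  rw [betaSet, Finset.card_image_of_injOn (beta_injOn hl), Finset.card_range]

lemma mem_betaSet {b : ℕ} : b ∈ betaSet m l ↔ ∃ i < m, beta m l i = b := by
  simp [betaSet]

lemma count_gt_beta (hl : Antitone l) {i : ℕ} (hi : i < m) :
    ((betaSet m l).filter (fun x => beta m l i < x)).card = i := by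
  have hset : (betaSet m l).filter (fun x => beta m l i < x)
      = (Finset.range i).image (beta m l) := by
    ext x
    simp only [Finset.mem_filter, mem_betaSet, Finset.mem_image, Finset.mem_range]
    constructor
    · rintro ⟨⟨j, hj, rfl⟩, hlt⟩
      refine ⟨j, ?_, rfl⟩
      by_contra hge
      push_neg at hge
      rcases Nat.eq_or_lt_of_le hge with rfl | h
      · omega
      · exact absurd hlt (Nat.not_lt.2 (Nat.le_of_lt (beta_lt hl h hj)))
    · rintro ⟨j, hj, rfl⟩
      exact ⟨⟨j, by omega, rfl⟩, beta_lt hl hj hi⟩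
  rw [hset, Finset.card_image_of_injOn, Finset.card_range]
  exact Set.InjOn.mono (by intro x hx; simp_all; omega) (beta_injOn hl)

lemma beta_eq_of_count (hl : Antitone l) {i b : ℕ} (hi : i < m) (hb : b ∈ betaSet m l)
    (hc : ((betaSet m l).filter (fun x => b < x)).card = i) : beta m l i = b := by
  obtain ⟨j, hj, rfl⟩ := mem_betaSet.1 hb
  have := count_gt_beta hl hj
  have : j = i := by omega
  subst this; rfl

end Beta

section Runner
open Finset

lemma resid_injOn (p s : ℕ) (F : Finset ℕ) (hF : ∀ b ∈ F, b % p = s) :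
    Set.InjOn (fun b => b / p) F := by
  intro a ha b hb hab
  simp only at hab
  have ha' : a % p = s := hF a ha
  have hb' : b % p = s := hF b hb
  have h1 : a = p * (a / p) + a % p := (Nat.div_add_mod a p).symm
  have h2 : b = p * (b / p) + b % p := (Nat.div_add_mod b p).symm
  rw [h1, h2, hab, ha', hb']

lemma card_rows_eq (p s : ℕ) (F : Finset ℕ) (hF : ∀ b ∈ F, b % p = s) :
    (F.image (fun b => b / p)).card = F.card :=
  Finset.card_image_of_injOn (resid_injOn p s F hF)

lemma divsum_resid (p s : ℕ) (F : Finset ℕ) (hF : ∀ b ∈ F, b % p = s) :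
    ∑ r ∈ F.image (fun b => b / p), r = ∑ b ∈ F, b / p :=
  Finset.sum_image (fun a ha b hb h => resid_injOn p s F hF ha hb h)

lemma sum_resid (p s : ℕ) (F : Finset ℕ) (hF : ∀ b ∈ F, b % p = s) :
    ∑ b ∈ F, b = F.card * s + p * ∑ r ∈ F.image (fun b => b / p), r := by
  rw [divsum_resid p s F hF]
  have : ∀ b ∈ F, b = s + p * (b / p) := by
    intro b hb
    have := Nat.div_add_mod b p
    have hb' : b % p = s := hF b hb
    omega
  rw [Finset.sum_congr rfl this, Finset.sum_add_distrib, Finset.sum_const,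
    ← Finset.mul_sum, smul_eq_mul, mul_comm]

variable {p m : ℕ} (l : ℕ → ℕ)

/-- sum of rows on runner s -/
def rsum (p m : ℕ) (l : ℕ → ℕ) (s : ℕ) : ℕ := ∑ r ∈ runnerRows p m l s, r

lemma hFres (s : ℕ) : ∀ b ∈ (betaSet m l).filter (fun b => b % p = s), b % p = s := by
  intro b hb
  exact (Finset.mem_filter.1 hb).2

lemma card_runnerRows (s : ℕ) : (runnerRows p m l s).card = runnerCount p m l s :=
  card_rows_eq p s _ (hFres l s)

lemma sum_runner (s : ℕ) :
    ∑ b ∈ (betaSet m l).filter (fun b => b % p = s), b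
      = runnerCount p m l s * s + p * rsum p m l s :=
  sum_resid p s _ (hFres l s)

lemma tri_le_rsum (s : ℕ) : tri (runnerCount p m l s) ≤ rsum p m l s := by
  rw [← card_runnerRows l s]
  exact tri_le_sum _

lemma sum_div_eq (hp : 0 < p) : ∑ b ∈ betaSet m l, b / p = ∑ s ∈ range p, rsum p m l s := by
  have hmaps : ∀ b ∈ betaSet m l, b % p ∈ range p := by
    intro b _
    simp [Nat.mod_lt b hp]
  rw [← Finset.sum_fiberwise_of_maps_to hmaps (fun b => b / p)]
  refine Finset.sum_congr rfl (fun s _ => ?_)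
  rw [rsum, runnerRows, divsum_resid p s _ (hFres l s)]

lemma m_eq_sum_counts (hp : 0 < p) (hl : Antitone l) :
    m = ∑ s ∈ range p, runnerCount p m l s := by
  have hmaps : ∀ b ∈ betaSet m l, b % p ∈ range p := by
    intro b _
    simp [Nat.mod_lt b hp]
  have h1 : (betaSet m l).card = ∑ s ∈ range p, runnerCount p m l s :=
    Finset.card_eq_sum_card_fiberwise hmaps
  rw [← h1, card_betaSet hl]

lemma pweight_eq (hp : 0 < p) :
    pweight p m l = (∑ s ∈ range p, rsum p m l s) - ∑ s ∈ range p, tri (runnerCount p m l s) := by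
  rw [pweight, sum_div_eq l hp]
  congr 1
  exact Finset.sum_congr rfl (fun s _ => choose_two_eq_tri _)

lemma sum_d_eq (hp : 0 < p) :
    ∑ s ∈ range p, (rsum p m l s - tri (runnerCount p m l s)) = pweight p m l := by
  rw [pweight_eq l hp]
  have h1 : ∑ s ∈ range p, rsum p m l s
      = ∑ s ∈ range p, tri (runnerCount p m l s)
        + ∑ s ∈ range p, (rsum p m l s - tri (runnerCount p m l s)) := by
    rw [← Finset.sum_add_distrib]
    refine Finset.sum_congr rfl (fun s _ => ?_)
    have := tri_le_rsum l (p := p) (m := m) s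
    omega
  omega

lemma mem_betaSet_runner (hp : 0 < p) {b : ℕ} :
    b ∈ betaSet m l ↔ b / p ∈ runnerRows p m l (b % p) := by
  constructor
  · intro hb
    rw [runnerRows]
    exact Finset.mem_image_of_mem _ (Finset.mem_filter.2 ⟨hb, rfl⟩)
  · intro hb
    rw [runnerRows, Finset.mem_image] at hb
    obtain ⟨b', hb', hdiv⟩ := hb
    have h1 := (Finset.mem_filter.1 hb').2
    have h2 := (Finset.mem_filter.1 hb').1
    have e1 := Nat.div_add_mod b p
    have e2 := Nat.div_add_mod b' p
    rw [← hdiv] at e1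
    have : b' = b := by omega
    rwa [← this]

end Runner

section Core
open Finset
variable {p m w : ℕ} {l ρ : ℕ → ℕ}

lemma rows_eq_range (hs : rsum p m l s = tri (runnerCount p m l s)) :
    runnerRows p m l s = range (runnerCount p m l s) := by
  have h1 := card_runnerRows (p := p) (m := m) l s
  have h2 := eq_range_of_sum_eq (runnerRows p m l s) (by rw [h1, hs.symm]; rfl)
  rwa [h1] at h2

lemma core_rsum (hp : 0 < p) (hcore : pweight p m ρ = 0) :
    ∀ s ∈ range p, rsum p m ρ s = tri (runnerCount p m ρ s) := by
  have h := sum_d_eq ρ (m := m) hp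
  rw [hcore] at h
  intro s hs
  have := (Finset.sum_eq_zero_iff.1 h) s hs
  have h2 := tri_le_rsum ρ (p := p) (m := m) s
  omega

lemma counts_mono (hp : 0 < p)
    (hr : ∀ i, 1 ≤ i → i < p → runnerCount p m ρ (i - 1) + (w - 1) ≤ runnerCount p m ρ i) :
    ∀ s t, s ≤ t → t < p → runnerCount p m ρ s ≤ runnerCount p m ρ t := by
  intro s t hst htp
  induction t with
  | zero =>
      have hs0 : s = 0 := by omega
      subst hs0
      exact le_refl _
  | succ t ih =>
    rcases Nat.eq_or_lt_of_le hst with rfl | h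
    · exact le_refl _
    · have h1 : runnerCount p m ρ s ≤ runnerCount p m ρ t := ih (by omega) (by omega)
      have h2 := hr (t+1) (by omega) htp
      simp only [Nat.add_sub_cancel] at h2
      omega

lemma counts_gap (hp : 0 < p) (hw : 0 < w)
    (hr : ∀ i, 1 ≤ i → i < p → runnerCount p m ρ (i - 1) + (w - 1) ≤ runnerCount p m ρ i)
    {s : ℕ} (hs : s < p - 1) :
    runnerCount p m ρ s + (w - 1) ≤ runnerCount p m ρ (p - 1) := by
  have h1 := hr (s+1) (by omega) (by omega)
  simp only [Nat.add_sub_cancel] at h1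
  have h2 := counts_mono hp hr (s+1) (p-1) (by omega) (by omega)
  omega

lemma count_le_m (hp : 0 < p) (hl : Antitone l) {s : ℕ} (hs : s < p) :
    runnerCount p m l s ≤ m := by
  have h := m_eq_sum_counts (p := p) (m := m) l hp hl
  conv_rhs => rw [h]
  exact Finset.single_le_sum (f := fun s => runnerCount p m l s)
    (fun _ _ => Nat.zero_le _) (by simpa using hs)

end Core

section TopBeta
open Finset
variable {p m : ℕ} {l : ℕ → ℕ}

lemma pr_mod (hp : 0 < p) (r : ℕ) : (p * r + (p-1)) % p = p - 1 := by
  rw [Nat.mul_add_mod]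
  exact Nat.mod_eq_of_lt (by omega)

lemma pr_div (hp : 0 < p) (r : ℕ) : (p * r + (p-1)) / p = r := by
  rw [Nat.mul_add_div hp]
  have : (p-1)/p = 0 := Nat.div_eq_of_lt (by omega)
  omega

lemma beta_top (hp : 0 < p) (hl : Antitone l)
    (hrows : ∀ s, s < p - 1 → runnerRows p m l s = range (runnerCount p m l s))
    (f' : ℕ → ℕ)
    (hmem : ∀ j, j < runnerCount p m l (p-1) → f' j ∈ runnerRows p m l (p-1))
    (hmono : ∀ j j', j < j' → j' < runnerCount p m l (p-1) → f' j < f' j')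
    (hsurj : ∀ r ∈ runnerRows p m l (p-1), ∃ j, j < runnerCount p m l (p-1) ∧ f' j = r)
    (hge : ∀ j, j < runnerCount p m l (p-1) → j ≤ f' j)
    {i : ℕ} (hi : i < runnerCount p m l (p-1))
    (hH : ∀ s, s < p - 1 → runnerCount p m l s + i ≤ runnerCount p m l (p-1)) :
    beta m l i = p * f' (runnerCount p m l (p-1) - 1 - i) + (p - 1) := by
  set c := runnerCount p m l (p-1) with hc
  have him : i < m := lt_of_lt_of_le hi (count_le_m hp hl (by omega))
  set b := p * f' (c - 1 - i) + (p - 1) with hb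
  have hbmod : b % p = p - 1 := pr_mod hp _
  have hbdiv : b / p = f' (c - 1 - i) := pr_div hp _
  have hbmem : b ∈ betaSet m l := by
    rw [mem_betaSet_runner l hp, hbmod, hbdiv]
    exact hmem _ (by omega)
  refine beta_eq_of_count hl him hbmem ?_
  have hset : (betaSet m l).filter (fun x => b < x)
      = (Ico (c - i) c).image (fun j => p * f' j + (p-1)) := by
    ext x
    simp only [Finset.mem_filter, Finset.mem_image, Finset.mem_Ico]
    constructor
    · rintro ⟨hx, hlt⟩
      have hxd := Nat.div_add_mod x p
      have hsp : x % p < p := Nat.mod_lt _ hp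
      rcases Nat.lt_or_ge (x % p) (p-1) with hs | hs
      · exfalso
        have hrow : x / p ∈ runnerRows p m l (x % p) := (mem_betaSet_runner l hp).1 hx
        rw [hrows _ hs, Finset.mem_range] at hrow
        have hCs : runnerCount p m l (x % p) + i ≤ c := hH _ hs
        have hgef : c - 1 - i ≤ f' (c - 1 - i) := hge _ (by omega)
        -- x > b ≥ p * (c-1-i) + (p-1), x = p*(x/p) + x%p with x%p ≤ p-2
        have : p * (x / p) + (x % p) > p * (c - 1 - i) + (p - 1) := by
          have h1 : p * (c - 1 - i) ≤ p * f' (c - 1 - i) := Nat.mul_le_mul_left _ hgef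
          omega
        have hxp : x / p > c - 1 - i := by
          by_contra hcon
          push_neg at hcon
          have := Nat.mul_le_mul_left p hcon
          omega
        omega
      · have hsp1 : x % p = p - 1 := by omega
        have hrow : x / p ∈ runnerRows p m l (p-1) := by
          have := (mem_betaSet_runner l hp).1 hx
          rwa [hsp1] at this
        obtain ⟨j, hj, hfj⟩ := hsurj _ hrow
        have hxe : x = p * f' j + (p-1) := by rw [hfj]; omega
        refine ⟨j, ⟨?_, hj⟩, hxe.symm⟩
        -- b < x means f' (c-1-i) < f' j, so c-1-i < j
        have hflt : f' (c - 1 - i) < f' j := by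
          by_contra hcon
          push_neg at hcon
          have := Nat.mul_le_mul_left p hcon
          omega
        by_contra hcon
        push_neg at hcon
        have hjle : j ≤ c - 1 - i := by omega
        rcases Nat.eq_or_lt_of_le hjle with rfl | hlt2
        · omega
        · have := hmono j (c-1-i) hlt2 (by omega)
          omega
    · rintro ⟨j, ⟨hj1, hj2⟩, rfl⟩
      have hmemj : p * f' j + (p-1) ∈ betaSet m l := by
        rw [mem_betaSet_runner l hp, pr_mod hp, pr_div hp]
        exact hmem _ hj2
      refine ⟨hmemj, ?_⟩
      have : f' (c - 1 - i) < f' j := hmono _ _ (by omega) hj2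
      have := (Nat.mul_lt_mul_left hp).2 this
      omega
  rw [hset, Finset.card_image_of_injOn, Nat.card_Ico]
  · omega
  · intro a ha b' hb' hab
    simp only [Finset.coe_Ico, Set.mem_Ico] at ha hb'
    simp only [add_left_inj] at hab
    have hfab : f' a = f' b' := by
      have := Nat.eq_of_mul_eq_mul_left hp hab
      exact this
    by_contra hne
    rcases Nat.lt_or_ge a b' with h | h
    · exact absurd hfab (Nat.ne_of_lt (hmono a b' h hb'.2))
    · have : b' < a := by omega
      exact absurd hfab.symm (Nat.ne_of_lt (hmono b' a this ha.2))

end TopBeta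

section CaseB
open Finset

lemma sum_split (t : Finset ℕ) (p : ℕ) (A B E : ℕ → ℕ) :
    ∑ s ∈ t, (A s + p * (B s + E s))
      = (∑ s ∈ t, A s) + p * ((∑ s ∈ t, B s) + (∑ s ∈ t, E s)) := by
  rw [Finset.sum_add_distrib, ← Finset.mul_sum, Finset.sum_add_distrib]

lemma caseB (p m w : ℕ) (hp : 0 < p) (hw : 0 < w) (ρ mu : ℕ → ℕ)
    (hρa : Antitone ρ) (hmua : Antitone mu)
    (hr : ∀ i, 1 ≤ i → i < p → runnerCount p m ρ (i-1) + (w-1) ≤ runnerCount p m ρ i)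
    (hρcore : pweight p m ρ = 0)
    (hCeq : ∀ s, runnerCount p m mu s = runnerCount p m ρ s)
    (hwt : pweight p m mu = w)
    (s0 : ℕ) (hs0 : s0 < p - 1)
    (hd : tri (runnerCount p m mu s0) < rsum p m mu s0) :
    ∑ i ∈ range w, beta m mu i < (∑ i ∈ range w, beta m ρ i) + p * w := by
  have hp2 : 2 ≤ p := by omega
  -- gap for mu counts
  have hgap : ∀ s, s < p - 1 →
      runnerCount p m mu s + (w-1) ≤ runnerCount p m mu (p-1) := by
    intro s hs
    rw [hCeq s, hCeq (p-1)]
    exact counts_gap hp hw hr hs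
  -- runner s0 is nonempty
  have hCs0 : 1 ≤ runnerCount p m mu s0 := by
    by_contra hcon
    push_neg at hcon
    have h0 : runnerCount p m mu s0 = 0 := by omega
    have hrr : runnerRows p m mu s0 = ∅ := by
      have h1 := card_runnerRows (p := p) (m := m) mu s0
      rw [h0] at h1
      exact Finset.card_eq_zero.1 h1
    rw [rsum, hrr] at hd
    simp [tri, h0] at hd
  have hwc : w ≤ runnerCount p m mu (p-1) := by
    have := hgap s0 hs0
    omega
  -- d values
  have hDsum : ∑ s ∈ range p, (rsum p m mu s - tri (runnerCount p m mu s)) = w := by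
    rw [sum_d_eq mu hp, hwt]
  have hDs0 : 1 ≤ rsum p m mu s0 - tri (runnerCount p m mu s0) := by omega
  have hs0p : s0 ∈ range p := by simp; omega
  -- w < m
  have hwm : w < m := by
    have hm := m_eq_sum_counts (p := p) (m := m) mu hp hmua
    have h1 : (p-1) ∈ (range p).erase s0 := by
      simp [Finset.mem_erase]
      omega
    have h2 : runnerCount p m mu (p-1) ≤ ∑ s ∈ (range p).erase s0, runnerCount p m mu s :=
      Finset.single_le_sum (f := fun s => runnerCount p m mu s) (fun _ _ => Nat.zero_le _) h1
    have h3 : ∑ s ∈ range p, runnerCount p m mu s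
        = runnerCount p m mu s0 + ∑ s ∈ (range p).erase s0, runnerCount p m mu s :=
      (Finset.add_sum_erase _ _ hs0p).symm
    omega
  -- rho's rows are initial ranges
  have hρrows : ∀ s, s < p → runnerRows p m ρ s = range (runnerCount p m ρ s) := by
    intro s hs
    exact rows_eq_range (core_rsum hp hρcore s (by simpa using hs))
  have hcρ : runnerCount p m ρ (p-1) = runnerCount p m mu (p-1) := (hCeq (p-1)).symm
  have hρtop : ∀ i, i < w →
      beta m ρ i = p * (runnerCount p m mu (p-1) - 1 - i) + (p - 1) := by
    intro i hi
    have h := beta_top hp hρa (fun s hs => hρrows s (by omega)) id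
      (fun j hj => by
        rw [hρrows (p-1) (by omega)]
        simpa using hj)
      (fun j j' h _ => h)
      (fun r hr' => by
        rw [hρrows (p-1) (by omega), Finset.mem_range] at hr'
        exact ⟨r, hr', rfl⟩)
      (fun j _ => le_refl j) (i := i) (by rw [hcρ]; omega)
      (fun s hs => by rw [hcρ, ← hCeq s]; have := hgap s hs; omega)
    rw [h, hcρ]
    rfl
  -- RHS evaluation
  have hRHS : ∑ i ∈ range w, beta m ρ i
      = p * (∑ i ∈ range w, (runnerCount p m mu (p-1) - 1 - i)) + w * (p - 1) := by
    rw [Finset.sum_congr rfl (fun i hi => hρtop i (Finset.mem_range.1 hi)),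
      Finset.sum_add_distrib, Finset.mul_sum, Finset.sum_const, Finset.card_range,
      smul_eq_mul]
  -- the top w beta numbers of mu
  set S : Finset ℕ := (range w).image (beta m mu) with hS
  have hSsub : S ⊆ betaSet m mu :=
    Finset.image_subset_image (Finset.range_subset_range.2 (le_of_lt hwm))
  have hinjS : Set.InjOn (beta m mu) (range w) :=
    Set.InjOn.mono (by intro x hx; simp only [Finset.coe_range, Set.mem_Iio] at hx ⊢; omega)
      (beta_injOn hmua)
  have hSsum : ∑ b ∈ S, b = ∑ i ∈ range w, beta m mu i :=
    Finset.sum_image (fun a ha b hb h => hinjS ha hb h)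
  have hScard : S.card = w := by
    rw [hS, Finset.card_image_of_injOn hinjS, Finset.card_range]
  have hmapsS : ∀ b ∈ S, b % p ∈ range p := fun b _ => by simp [Nat.mod_lt b hp]
  have hfib : ∑ s ∈ range p, ∑ b ∈ S.filter (fun b => b % p = s), b = ∑ b ∈ S, b :=
    Finset.sum_fiberwise_of_maps_to hmapsS (fun b => b)
  have hKsum : ∑ s ∈ range p, (S.filter (fun b => b % p = s)).card = w := by
    rw [← hScard]
    exact (Finset.card_eq_sum_card_fiberwise hmapsS).symm
  -- per-runner analysis
  have hss : ∀ s ∈ range p, ∑ b ∈ S.filter (fun b => b % p = s), b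
      = (S.filter (fun b => b % p = s)).card * s
        + p * ∑ r ∈ (S.filter (fun b => b % p = s)).image (fun b => b / p), r :=
    fun s _ => sum_resid p s _ (fun b hb => (Finset.mem_filter.1 hb).2)
  have hTsub : ∀ s, (S.filter (fun b => b % p = s)).image (fun b => b / p)
      ⊆ runnerRows p m mu s := by
    intro s
    rw [runnerRows]
    exact Finset.image_subset_image (Finset.filter_subset_filter _ hSsub)
  have hTcard : ∀ s, ((S.filter (fun b => b % p = s)).image (fun b => b / p)).card
      = (S.filter (fun b => b % p = s)).card :=
    fun s => card_rows_eq p s _ (fun b hb => (Finset.mem_filter.1 hb).2)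
  have hKC : ∀ s, (S.filter (fun b => b % p = s)).card ≤ runnerCount p m mu s := by
    intro s
    rw [← hTcard s, ← card_runnerRows (p := p) (m := m) mu s]
    exact Finset.card_le_card (hTsub s)
  have hTle : ∀ s, ∑ r ∈ (S.filter (fun b => b % p = s)).image (fun b => b / p), r
      ≤ (tri (runnerCount p m mu s)
          - tri (runnerCount p m mu s - (S.filter (fun b => b % p = s)).card))
        + (rsum p m mu s - tri (runnerCount p m mu s)) := by
    intro s
    have h1 : ∑ r ∈ runnerRows p m mu s \ (S.filter (fun b => b % p = s)).image (fun b => b / p), r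
        + ∑ r ∈ (S.filter (fun b => b % p = s)).image (fun b => b / p), r
        = rsum p m mu s := Finset.sum_sdiff (hTsub s)
    have h2 : (runnerRows p m mu s \ (S.filter (fun b => b % p = s)).image (fun b => b / p)).card
        = runnerCount p m mu s - (S.filter (fun b => b % p = s)).card := by
      rw [Finset.card_sdiff_of_subset (hTsub s), card_runnerRows, hTcard]
    have h3 := tri_le_sum (runnerRows p m mu s \ (S.filter (fun b => b % p = s)).image (fun b => b / p))
    rw [h2] at h3
    have h4 := tri_le_rsum (p := p) (m := m) mu s
    have h5 : tri (runnerCount p m mu s - (S.filter (fun b => b % p = s)).card)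
        ≤ tri (runnerCount p m mu s) := tri_mono (by omega)
    omega
  -- split at p-1
  have hsplitK : ∑ s ∈ range p, (S.filter (fun b => b % p = s)).card
      = (∑ s ∈ range (p-1), (S.filter (fun b => b % p = s)).card)
        + (S.filter (fun b => b % p = (p-1))).card := by
    have h := Finset.sum_range_succ (fun s => (S.filter (fun b => b % p = s)).card) (p-1)
    beta_reduce at h
    rw [show p - 1 + 1 = p from by omega] at h
    exact h
  have hk_le : (S.filter (fun b => b % p = (p-1))).card ≤ w := by omega
  -- bound on the G-sum
  have hGsum : ∑ s ∈ range p,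
      (tri (runnerCount p m mu s)
        - tri (runnerCount p m mu s - (S.filter (fun b => b % p = s)).card))
      ≤ ∑ i ∈ range w, (runnerCount p m mu (p-1) - 1 - i) := by
    have hV : ∑ i ∈ range w, (runnerCount p m mu (p-1) - 1 - i)
        = w * (runnerCount p m mu (p-1) - w) + tri w := by
      have hterm : ∀ i ∈ range w, runnerCount p m mu (p-1) - 1 - i
          = (runnerCount p m mu (p-1) - w) + (w - 1 - i) := by
        intro i hi
        simp only [Finset.mem_range] at hi
        omega
      rw [Finset.sum_congr rfl hterm, Finset.sum_add_distrib, Finset.sum_const,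
        Finset.card_range, smul_eq_mul]
      congr 1
      exact Finset.sum_range_reflect (fun j => j) w
    have htricc : tri (runnerCount p m mu (p-1))
        = tri (runnerCount p m mu (p-1) - w)
          + (w * (runnerCount p m mu (p-1) - w) + tri w) := by
      have h2 : runnerCount p m mu (p-1) = (runnerCount p m mu (p-1) - w) + w := by omega
      calc tri (runnerCount p m mu (p-1)) = tri ((runnerCount p m mu (p-1) - w) + w) := by
            rw [← h2]
        _ = tri (runnerCount p m mu (p-1) - w) + w * (runnerCount p m mu (p-1) - w) + tri w :=
            tri_add _ _
        _ = _ := by ring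
    have hsplitG : ∑ s ∈ range p,
        (tri (runnerCount p m mu s)
          - tri (runnerCount p m mu s - (S.filter (fun b => b % p = s)).card))
        = (∑ s ∈ range (p-1),
            (tri (runnerCount p m mu s)
              - tri (runnerCount p m mu s - (S.filter (fun b => b % p = s)).card)))
          + (tri (runnerCount p m mu (p-1))
              - tri (runnerCount p m mu (p-1) - (S.filter (fun b => b % p = (p-1))).card)) := by
      have h := Finset.sum_range_succ (fun s =>
        tri (runnerCount p m mu s)
          - tri (runnerCount p m mu s - (S.filter (fun b => b % p = s)).card)) (p-1)
      beta_reduce at h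
      rw [show p - 1 + 1 = p from by omega] at h
      exact h
    have hGlow : ∑ s ∈ range (p-1),
        (tri (runnerCount p m mu s)
          - tri (runnerCount p m mu s - (S.filter (fun b => b % p = s)).card))
        ≤ (∑ s ∈ range (p-1), (S.filter (fun b => b % p = s)).card)
            * (runnerCount p m mu (p-1) - w) := by
      rw [Finset.sum_mul]
      refine Finset.sum_le_sum (fun s hs => ?_)
      simp only [Finset.mem_range] at hs
      have h1 := tri_sub_le (runnerCount p m mu s) ((S.filter (fun b => b % p = s)).card) (hKC s)
      have h2 : (S.filter (fun b => b % p = s)).card * (runnerCount p m mu s - 1)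
          ≤ (S.filter (fun b => b % p = s)).card * (runnerCount p m mu (p-1) - w) := by
        refine Nat.mul_le_mul_left _ ?_
        have := hgap s hs
        omega
      have h5 : tri (runnerCount p m mu s - (S.filter (fun b => b % p = s)).card)
          ≤ tri (runnerCount p m mu s) := tri_mono (by omega)
      omega
    have hgapT : tri (runnerCount p m mu (p-1) - w)
        + (w - (S.filter (fun b => b % p = (p-1))).card) * (runnerCount p m mu (p-1) - w)
        ≤ tri (runnerCount p m mu (p-1) - (S.filter (fun b => b % p = (p-1))).card) := by
      have h := tri_gap (runnerCount p m mu (p-1) - w)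
        (runnerCount p m mu (p-1) - (S.filter (fun b => b % p = (p-1))).card) (by omega)
      have he : (runnerCount p m mu (p-1) - (S.filter (fun b => b % p = (p-1))).card)
          - (runnerCount p m mu (p-1) - w)
          = w - (S.filter (fun b => b % p = (p-1))).card := by omega
      rw [he] at h
      exact h
    have hmul_mono : (∑ s ∈ range (p-1), (S.filter (fun b => b % p = s)).card)
            * (runnerCount p m mu (p-1) - w)
        = (w - (S.filter (fun b => b % p = (p-1))).card) * (runnerCount p m mu (p-1) - w) := by
      congr 1
      omega
    have h5 : tri (runnerCount p m mu (p-1) - (S.filter (fun b => b % p = (p-1))).card)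
        ≤ tri (runnerCount p m mu (p-1)) := tri_mono (by omega)
    rw [hV]
    omega
  -- put everything together
  have hfinal : ∑ b ∈ S, b
      < p * (∑ i ∈ range w, (runnerCount p m mu (p-1) - 1 - i)) + w * (p-1) + p * w := by
    rcases Nat.eq_zero_or_pos ((S.filter (fun b => b % p = s0)).card) with hk0 | hk0
    · -- no bead of the top w on runner s0
      have hT0 : (S.filter (fun b => b % p = s0)) = ∅ := Finset.card_eq_zero.1 hk0
      have hbound : ∀ s ∈ range p, ∑ b ∈ S.filter (fun b => b % p = s), b
          ≤ (S.filter (fun b => b % p = s)).card * s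
            + p * ((tri (runnerCount p m mu s)
                - tri (runnerCount p m mu s - (S.filter (fun b => b % p = s)).card))
              + (if s = s0 then 0 else rsum p m mu s - tri (runnerCount p m mu s))) := by
        intro s hs
        rcases eq_or_ne s s0 with rfl | hne
        · rw [hT0]
          simp
        · rw [hss s hs, if_neg hne]
          have h1 := Nat.mul_le_mul_left p (hTle s)
          omega
      have hsum_bound : ∑ b ∈ S, b ≤ ∑ s ∈ range p,
          ((S.filter (fun b => b % p = s)).card * s
            + p * ((tri (runnerCount p m mu s)
                - tri (runnerCount p m mu s - (S.filter (fun b => b % p = s)).card))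
              + (if s = s0 then 0 else rsum p m mu s - tri (runnerCount p m mu s)))) := by
        rw [← hfib]
        exact Finset.sum_le_sum hbound
      rw [sum_split] at hsum_bound
      have hKs_le : ∑ s ∈ range p, (S.filter (fun b => b % p = s)).card * s ≤ w * (p-1) := by
        calc ∑ s ∈ range p, (S.filter (fun b => b % p = s)).card * s
            ≤ ∑ s ∈ range p, (S.filter (fun b => b % p = s)).card * (p-1) :=
              Finset.sum_le_sum (fun s hs => Nat.mul_le_mul_left _
                (by simp only [Finset.mem_range] at hs; omega))
          _ = (∑ s ∈ range p, (S.filter (fun b => b % p = s)).card) * (p-1) :=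
              (Finset.sum_mul _ _ _).symm
          _ = w * (p-1) := by rw [hKsum]
      have hE_le : ∑ s ∈ range p,
          (if s = s0 then 0 else rsum p m mu s - tri (runnerCount p m mu s)) ≤ w - 1 := by
        have h1 : ∑ s ∈ range p,
            (if s = s0 then 0 else rsum p m mu s - tri (runnerCount p m mu s))
            = (if s0 = s0 then 0 else rsum p m mu s0 - tri (runnerCount p m mu s0))
              + ∑ s ∈ (range p).erase s0,
                (if s = s0 then 0 else rsum p m mu s - tri (runnerCount p m mu s)) :=
          (Finset.add_sum_erase _ _ hs0p).symm
        rw [if_pos rfl] at h1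
        have h2 : ∑ s ∈ (range p).erase s0,
            (if s = s0 then 0 else rsum p m mu s - tri (runnerCount p m mu s))
            = ∑ s ∈ (range p).erase s0, (rsum p m mu s - tri (runnerCount p m mu s)) :=
          Finset.sum_congr rfl (fun s hs => if_neg (Finset.mem_erase.1 hs).1)
        have h3 : ∑ s ∈ range p, (rsum p m mu s - tri (runnerCount p m mu s))
            = (rsum p m mu s0 - tri (runnerCount p m mu s0))
              + ∑ s ∈ (range p).erase s0, (rsum p m mu s - tri (runnerCount p m mu s)) :=
          (Finset.add_sum_erase _ _ hs0p).symm
        omega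
      have hGE : p * ((∑ s ∈ range p,
            (tri (runnerCount p m mu s)
              - tri (runnerCount p m mu s - (S.filter (fun b => b % p = s)).card)))
          + (∑ s ∈ range p,
            (if s = s0 then 0 else rsum p m mu s - tri (runnerCount p m mu s))))
          ≤ p * ((∑ i ∈ range w, (runnerCount p m mu (p-1) - 1 - i)) + (w - 1)) :=
        Nat.mul_le_mul_left p (by omega)
      have hmulsplit : p * ((∑ i ∈ range w, (runnerCount p m mu (p-1) - 1 - i)) + (w - 1))
          = p * (∑ i ∈ range w, (runnerCount p m mu (p-1) - 1 - i)) + p * (w-1) :=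
        Nat.mul_add p _ _
      have hlt : p * (w-1) < p * w := by
        have : w - 1 < w := by omega
        exact (Nat.mul_lt_mul_left hp).2 this
      omega
    · -- a bead of the top w lies on runner s0
      have hbound : ∀ s ∈ range p, ∑ b ∈ S.filter (fun b => b % p = s), b
          ≤ (S.filter (fun b => b % p = s)).card * s
            + p * ((tri (runnerCount p m mu s)
                - tri (runnerCount p m mu s - (S.filter (fun b => b % p = s)).card))
              + (rsum p m mu s - tri (runnerCount p m mu s))) := by
        intro s hs
        rw [hss s hs]
        have h1 := Nat.mul_le_mul_left p (hTle s)
        omega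
      have hsum_bound : ∑ b ∈ S, b ≤ ∑ s ∈ range p,
          ((S.filter (fun b => b % p = s)).card * s
            + p * ((tri (runnerCount p m mu s)
                - tri (runnerCount p m mu s - (S.filter (fun b => b % p = s)).card))
              + (rsum p m mu s - tri (runnerCount p m mu s)))) := by
        rw [← hfib]
        exact Finset.sum_le_sum hbound
      rw [sum_split] at hsum_bound
      have hKs_lt : ∑ s ∈ range p, (S.filter (fun b => b % p = s)).card * s < w * (p-1) := by
        calc ∑ s ∈ range p, (S.filter (fun b => b % p = s)).card * s
            < ∑ s ∈ range p, (S.filter (fun b => b % p = s)).card * (p-1) := by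
              refine Finset.sum_lt_sum (fun s hs => Nat.mul_le_mul_left _
                (by simp only [Finset.mem_range] at hs; omega)) ⟨s0, hs0p, ?_⟩
              exact (Nat.mul_lt_mul_left hk0).2 (by omega)
          _ = (∑ s ∈ range p, (S.filter (fun b => b % p = s)).card) * (p-1) :=
              (Finset.sum_mul _ _ _).symm
          _ = w * (p-1) := by rw [hKsum]
      have hGE : p * ((∑ s ∈ range p,
            (tri (runnerCount p m mu s)
              - tri (runnerCount p m mu s - (S.filter (fun b => b % p = s)).card)))
          + (∑ s ∈ range p, (rsum p m mu s - tri (runnerCount p m mu s))))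
          ≤ p * ((∑ i ∈ range w, (runnerCount p m mu (p-1) - 1 - i)) + w) :=
        Nat.mul_le_mul_left p (by omega)
      have hmulsplit : p * ((∑ i ∈ range w, (runnerCount p m mu (p-1) - 1 - i)) + w)
          = p * (∑ i ∈ range w, (runnerCount p m mu (p-1) - 1 - i)) + p * w :=
        Nat.mul_add p _ _
      omega
  rw [hRHS, ← hSsum]
  omega

end CaseB

section CaseA
open Finset

lemma caseA (p m w : ℕ) (hp : 0 < p) (hw : 0 < w) (ρ mu : ℕ → ℕ)
    (hρa : Antitone ρ) (hmua : Antitone mu)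
    (hρm : ∀ i, m ≤ i → ρ i = 0) (hmum : ∀ i, m ≤ i → mu i = 0)
    (hr : ∀ i, 1 ≤ i → i < p → runnerCount p m ρ (i-1) + (w-1) ≤ runnerCount p m ρ i)
    (hρcore : pweight p m ρ = 0)
    (hCeq : ∀ s, runnerCount p m mu s = runnerCount p m ρ s)
    (hwt : pweight p m mu = w)
    (hA : ∀ s, s < p - 1 → rsum p m mu s = tri (runnerCount p m mu s)) :
    ∃ nu : ℕ → ℕ, IsPartition nu ∧ (∑ i ∈ Finset.range w, nu i = w) ∧
      (∀ i, w ≤ i → nu i = 0) ∧ (∀ i, mu i = ρ i + p * nu i) := by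
  have hgap : ∀ s, s < p - 1 →
      runnerCount p m mu s + (w-1) ≤ runnerCount p m mu (p-1) := by
    intro s hs
    rw [hCeq s, hCeq (p-1)]
    exact counts_gap hp hw hr hs
  have hμrows_low : ∀ s, s < p - 1 →
      runnerRows p m mu s = range (runnerCount p m mu s) :=
    fun s hs => rows_eq_range (hA s hs)
  have hρrows : ∀ s, s < p → runnerRows p m ρ s = range (runnerCount p m ρ s) := by
    intro s hs
    exact rows_eq_range (core_rsum hp hρcore s (by simpa using hs))
  -- all the weight is on the last runner
  have hDsum : ∑ s ∈ range p, (rsum p m mu s - tri (runnerCount p m mu s)) = w := by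
    rw [sum_d_eq mu hp, hwt]
  have hDlast : rsum p m mu (p-1) = tri (runnerCount p m mu (p-1)) + w := by
    have hsplit : ∑ s ∈ range p, (rsum p m mu s - tri (runnerCount p m mu s))
        = (∑ s ∈ range (p-1), (rsum p m mu s - tri (runnerCount p m mu s)))
          + (rsum p m mu (p-1) - tri (runnerCount p m mu (p-1))) := by
      have h := Finset.sum_range_succ
        (fun s => rsum p m mu s - tri (runnerCount p m mu s)) (p-1)
      beta_reduce at h
      rw [show p - 1 + 1 = p from by omega] at h
      exact h
    have hz : ∑ s ∈ range (p-1), (rsum p m mu s - tri (runnerCount p m mu s)) = 0 :=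
      Finset.sum_eq_zero (fun s hs => by
        rw [hA s (Finset.mem_range.1 hs)]
        omega)
    have hle := tri_le_rsum (p := p) (m := m) mu (p-1)
    omega
  have hm_sum := m_eq_sum_counts (p := p) (m := m) mu hp hmua
  have hcm : runnerCount p m mu (p-1) ≤ m := count_le_m hp hmua (by omega)
  -- if c < w then all beads are on the last runner
  have hm_eq_c : runnerCount p m mu (p-1) < w → m = runnerCount p m mu (p-1) := by
    intro hcw
    have hz : ∀ s, s < p - 1 → runnerCount p m mu s = 0 := by
      intro s hs
      have := hgap s hs
      omega
    have hsplit : ∑ s ∈ range p, runnerCount p m mu s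
        = (∑ s ∈ range (p-1), runnerCount p m mu s) + runnerCount p m mu (p-1) := by
      have h := Finset.sum_range_succ (fun s => runnerCount p m mu s) (p-1)
      beta_reduce at h
      rw [show p - 1 + 1 = p from by omega] at h
      exact h
    have hz2 : ∑ s ∈ range (p-1), runnerCount p m mu s = 0 :=
      Finset.sum_eq_zero (fun s hs => hz s (Finset.mem_range.1 hs))
    omega
  -- the increasing enumeration of the rows on the last runner
  have hRcard : (runnerRows p m mu (p-1)).card = runnerCount p m mu (p-1) :=
    card_runnerRows (p := p) (m := m) mu (p-1)
  set f0 : Fin (runnerCount p m mu (p-1)) ↪o ℕ :=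
    (runnerRows p m mu (p-1)).orderEmbOfFin hRcard with hf0
  set f' : ℕ → ℕ := fun j =>
    if h : j < runnerCount p m mu (p-1) then f0 ⟨j, h⟩ else j with hf'
  have hf'mem : ∀ j, j < runnerCount p m mu (p-1) → f' j ∈ runnerRows p m mu (p-1) := by
    intro j hj
    rw [hf']
    simp only [dif_pos hj]
    exact Finset.orderEmbOfFin_mem _ _ _
  have hf'mono : ∀ j j', j < j' → j' < runnerCount p m mu (p-1) → f' j < f' j' := by
    intro j j' hjj' hj'
    rw [hf']
    simp only [dif_pos (lt_trans hjj' hj'), dif_pos hj']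
    exact f0.strictMono (Fin.mk_lt_mk.2 hjj')
  have hf'surj : ∀ r ∈ runnerRows p m mu (p-1),
      ∃ j, j < runnerCount p m mu (p-1) ∧ f' j = r := by
    intro r hr'
    have : r ∈ Set.range f0 := by
      rw [Finset.range_orderEmbOfFin]
      exact hr'
    obtain ⟨j, hj⟩ := this
    refine ⟨j.1, j.2, ?_⟩
    rw [hf']
    simp only [dif_pos j.2]
    rw [← hj]
  have hf'ge : ∀ j, j < runnerCount p m mu (p-1) → j ≤ f' j := by
    intro j
    induction j with
    | zero => intro _; exact Nat.zero_le _
    | succ j ih =>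
      intro h
      have h1 := ih (by omega)
      have h2 := hf'mono j (j+1) (by omega) h
      omega
  have hf'add : ∀ d j, j + d < runnerCount p m mu (p-1) → f' j + d ≤ f' (j + d) := by
    intro d
    induction d with
    | zero => intro j _; simp
    | succ d ih =>
      intro j h
      have h1 := ih j (by omega)
      have h2 := hf'mono (j+d) (j+d+1) (by omega) (by omega)
      have : j + (d+1) = (j+d) + 1 := by omega
      rw [this]
      omega
  have hRim : runnerRows p m mu (p-1) = (range (runnerCount p m mu (p-1))).image f' := by
    ext r
    simp only [Finset.mem_image, Finset.mem_range]
    constructor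
    · intro hr'
      obtain ⟨j, hj, hfj⟩ := hf'surj r hr'
      exact ⟨j, hj, hfj⟩
    · rintro ⟨j, hj, rfl⟩
      exact hf'mem j hj
  have hf'injOn : Set.InjOn f' (range (runnerCount p m mu (p-1))) := by
    intro a ha b hb hab
    simp only [Finset.coe_range, Set.mem_Iio] at ha hb
    by_contra hne
    rcases Nat.lt_or_ge a b with h | h
    · exact absurd hab (Nat.ne_of_lt (hf'mono a b h hb))
    · have : b < a := by omega
      exact absurd hab.symm (Nat.ne_of_lt (hf'mono b a this ha))
  have hf'sum : ∑ j ∈ range (runnerCount p m mu (p-1)), f' j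
      = tri (runnerCount p m mu (p-1)) + w := by
    have h1 : ∑ j ∈ range (runnerCount p m mu (p-1)), f' j
        = ∑ r ∈ runnerRows p m mu (p-1), r := by
      rw [hRim]
      exact (Finset.sum_image (f := fun x => x) (g := f')
        (fun a ha b hb h => hf'injOn ha hb h)).symm
    rw [h1]
    exact hDlast
  have hδsum : ∑ j ∈ range (runnerCount p m mu (p-1)), (f' j - j) = w := by
    have h1 : ∑ j ∈ range (runnerCount p m mu (p-1)), f' j
        = ∑ j ∈ range (runnerCount p m mu (p-1)), ((f' j - j) + j) :=
      Finset.sum_congr rfl (fun j hj => by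
        have := hf'ge j (Finset.mem_range.1 hj)
        omega)
    rw [Finset.sum_add_distrib] at h1
    have h2 : ∑ j ∈ range (runnerCount p m mu (p-1)), j = tri (runnerCount p m mu (p-1)) := rfl
    omega
  have hδzero : ∀ j, j < runnerCount p m mu (p-1) - w → f' j = j := by
    intro j0 hj0
    by_contra hne
    have hge : j0 + 1 ≤ f' j0 := by
      have := hf'ge j0 (by omega)
      omega
    have hone : ∀ j ∈ Finset.Ico j0 (runnerCount p m mu (p-1)), 1 ≤ f' j - j := by
      intro j hj
      simp only [Finset.mem_Ico] at hj
      rcases Nat.eq_or_lt_of_le hj.1 with rfl | hlt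
      · omega
      · have := hf'add (j - j0) j0 (by omega)
        rw [show j0 + (j - j0) = j from by omega] at this
        omega
    have hsub : Finset.Ico j0 (runnerCount p m mu (p-1)) ⊆ range (runnerCount p m mu (p-1)) := by
      intro x hx
      simp only [Finset.mem_Ico] at hx
      simp only [Finset.mem_range]
      omega
    have h1 : ∑ j ∈ Finset.Ico j0 (runnerCount p m mu (p-1)), (f' j - j)
        ≤ ∑ j ∈ range (runnerCount p m mu (p-1)), (f' j - j) :=
      Finset.sum_le_sum_of_subset hsub
    have h2 : (runnerCount p m mu (p-1)) - j0
        ≤ ∑ j ∈ Finset.Ico j0 (runnerCount p m mu (p-1)), (f' j - j) := by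
      calc (runnerCount p m mu (p-1)) - j0
          = ∑ _j ∈ Finset.Ico j0 (runnerCount p m mu (p-1)), 1 := by
            rw [Finset.sum_const, Nat.card_Ico, smul_eq_mul, Nat.mul_one]
        _ ≤ _ := Finset.sum_le_sum hone
    omega
  -- definition of the quotient partition nu
  set nu : ℕ → ℕ := fun i =>
    if i < runnerCount p m mu (p-1)
    then f' (runnerCount p m mu (p-1) - 1 - i) - (runnerCount p m mu (p-1) - 1 - i)
    else 0 with hnu
  have hcρ : runnerCount p m ρ (p-1) = runnerCount p m mu (p-1) := (hCeq (p-1)).symm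
  -- the case distinction on indices
  have hcase : ∀ i, i < m →
      (i < runnerCount p m mu (p-1)
        ∧ (∀ s, s < p-1 → runnerCount p m mu s + i ≤ runnerCount p m mu (p-1))) ∨ w ≤ i := by
    intro i him
    by_cases hiw : i < w
    · left
      have hH : ∀ s, s < p-1 → runnerCount p m mu s + i ≤ runnerCount p m mu (p-1) := by
        intro s hs
        have := hgap s hs
        omega
      refine ⟨?_, hH⟩
      by_contra hic
      push_neg at hic
      have := hm_eq_c (by omega)
      omega
    · right
      omega
  -- top beta numbers
  have hμtop : ∀ i, i < runnerCount p m mu (p-1) →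
      (∀ s, s < p-1 → runnerCount p m mu s + i ≤ runnerCount p m mu (p-1)) →
      beta m mu i = p * f' (runnerCount p m mu (p-1) - 1 - i) + (p-1) := by
    intro i hi hH
    exact beta_top hp hmua hμrows_low f' hf'mem hf'mono hf'surj hf'ge hi hH
  have hρtop : ∀ i, i < runnerCount p m mu (p-1) →
      (∀ s, s < p-1 → runnerCount p m mu s + i ≤ runnerCount p m mu (p-1)) →
      beta m ρ i = p * (runnerCount p m mu (p-1) - 1 - i) + (p-1) := by
    intro i hi hH
    have h := beta_top hp hρa (fun s hs => hρrows s (by omega)) id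
      (fun j hj => by
        rw [hρrows (p-1) (by omega)]
        simpa using hj)
      (fun j j' h _ => h)
      (fun r hr' => by
        rw [hρrows (p-1) (by omega), Finset.mem_range] at hr'
        exact ⟨r, hr', rfl⟩)
      (fun j _ => le_refl j) (i := i) (by rw [hcρ]; omega)
      (fun s hs => by rw [hcρ, ← hCeq s]; exact hH s hs)
    rw [h, hcρ]
    rfl
  -- middle beta numbers agree
  have hmid : ∀ i, w ≤ i → i < m → beta m mu i = beta m ρ i := by
    intro i hiw him
    have hwc : w ≤ runnerCount p m mu (p-1) := by
      by_contra hcon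
      push_neg at hcon
      have := hm_eq_c hcon
      omega
    -- membership transfer below the threshold
    have htrans : ∀ x, x < p * (runnerCount p m mu (p-1) - w) + (p-1) →
        (x ∈ betaSet m ρ ↔ x ∈ betaSet m mu) := by
      intro x hx
      have hxp : x % p < p := Nat.mod_lt _ hp
      have hxd := Nat.div_add_mod x p
      rw [mem_betaSet_runner ρ hp, mem_betaSet_runner mu hp]
      rcases Nat.lt_or_ge (x % p) (p-1) with hs | hs
      · rw [hρrows _ (by omega), hμrows_low _ hs, hCeq]
      · have hsp : x % p = p - 1 := by omega
        rw [hsp, hρrows _ (by omega), hcρ, Finset.mem_range]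
        have hjc : x / p < runnerCount p m mu (p-1) - w := by
          by_contra hcon
          push_neg at hcon
          have := Nat.mul_le_mul_left p hcon
          omega
        exact iff_of_true (by omega)
          (by rw [← hδzero _ hjc]; exact hf'mem _ (by omega))
    have hbmemρ : beta m ρ i ∈ betaSet m ρ := mem_betaSet.2 ⟨i, him, rfl⟩
    have hcountρ : ((betaSet m ρ).filter (fun x => beta m ρ i < x)).card = i :=
      count_gt_beta hρa him
    have hNval : beta m ρ (w-1) = p * (runnerCount p m mu (p-1) - w) + (p-1) := by
      have h := hρtop (w-1) (by omega) (fun s hs => by have := hgap s hs; omega)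
      rw [h, show runnerCount p m mu (p-1) - 1 - (w-1)
        = runnerCount p m mu (p-1) - w from by omega]
    have hbN : beta m ρ i < p * (runnerCount p m mu (p-1) - w) + (p-1) := by
      rw [← hNval]
      exact beta_lt hρa (by omega) him
    -- count of large elements for rho
    have hcntρ : ((betaSet m ρ).filter
        (fun x => p * (runnerCount p m mu (p-1) - w) + (p-1) ≤ x)).card = w := by
      have hset : (betaSet m ρ).filter
          (fun x => p * (runnerCount p m mu (p-1) - w) + (p-1) ≤ x)
          = (Finset.Ico (runnerCount p m mu (p-1) - w) (runnerCount p m mu (p-1))).image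
              (fun j => p * j + (p-1)) := by
        ext x
        simp only [Finset.mem_filter, Finset.mem_image, Finset.mem_Ico]
        constructor
        · rintro ⟨hx, hNx⟩
          have hxp : x % p < p := Nat.mod_lt _ hp
          have hxd := Nat.div_add_mod x p
          have hrow := (mem_betaSet_runner ρ hp).1 hx
          rcases Nat.lt_or_ge (x % p) (p-1) with hs | hs
          · exfalso
            rw [hρrows _ (by omega), Finset.mem_range] at hrow
            have hCs : runnerCount p m ρ (x % p) + (w-1) ≤ runnerCount p m mu (p-1) := by
              rw [← hCeq (x % p)]
              exact hgap (x % p) hs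
            have h1 : x / p ≤ runnerCount p m mu (p-1) - w := by omega
            have h2 := Nat.mul_le_mul_left p h1
            omega
          · have hsp : x % p = p - 1 := by omega
            rw [hsp, hρrows _ (by omega), hcρ, Finset.mem_range] at hrow
            refine ⟨x / p, ⟨?_, hrow⟩, by omega⟩
            by_contra hcon
            push_neg at hcon
            have h1 : x / p + 1 ≤ runnerCount p m mu (p-1) - w := by omega
            have h2 := Nat.mul_le_mul_left p h1
            rw [Nat.mul_succ] at h2
            omega
        · rintro ⟨j, ⟨hj1, hj2⟩, rfl⟩
          refine ⟨?_, ?_⟩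
          · rw [mem_betaSet_runner ρ hp, pr_mod hp, pr_div hp, hρrows _ (by omega), hcρ,
              Finset.mem_range]
            exact hj2
          · have := Nat.mul_le_mul_left p hj1
            omega
      rw [hset, Finset.card_image_of_injOn, Nat.card_Ico]
      · omega
      · intro a ha b hb hab
        simp only [add_left_inj] at hab
        exact Nat.eq_of_mul_eq_mul_left hp hab
    -- count of large elements for mu
    have hcntμ : ((betaSet m mu).filter
        (fun x => p * (runnerCount p m mu (p-1) - w) + (p-1) ≤ x)).card = w := by
      have hset : (betaSet m mu).filter
          (fun x => p * (runnerCount p m mu (p-1) - w) + (p-1) ≤ x)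
          = (Finset.Ico (runnerCount p m mu (p-1) - w) (runnerCount p m mu (p-1))).image
              (fun j => p * f' j + (p-1)) := by
        ext x
        simp only [Finset.mem_filter, Finset.mem_image, Finset.mem_Ico]
        constructor
        · rintro ⟨hx, hNx⟩
          have hxp : x % p < p := Nat.mod_lt _ hp
          have hxd := Nat.div_add_mod x p
          have hrow := (mem_betaSet_runner mu hp).1 hx
          rcases Nat.lt_or_ge (x % p) (p-1) with hs | hs
          · exfalso
            rw [hμrows_low _ hs, Finset.mem_range] at hrow
            have hCs := hgap (x % p) hs
            have h1 : x / p ≤ runnerCount p m mu (p-1) - w := by omega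
            have h2 := Nat.mul_le_mul_left p h1
            omega
          · have hsp : x % p = p - 1 := by omega
            rw [hsp] at hrow
            obtain ⟨j, hj, hfj⟩ := hf'surj _ hrow
            refine ⟨j, ⟨?_, hj⟩, by rw [hfj]; omega⟩
            by_contra hcon
            push_neg at hcon
            have hfjj := hδzero j (by omega)
            have hjx : j = x / p := by omega
            have h2 : j + 1 ≤ runnerCount p m mu (p-1) - w := by omega
            have h3 := Nat.mul_le_mul_left p h2
            rw [Nat.mul_succ, hjx] at h3
            omega
        · rintro ⟨j, ⟨hj1, hj2⟩, rfl⟩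
          refine ⟨?_, ?_⟩
          · rw [mem_betaSet_runner mu hp, pr_mod hp, pr_div hp]
            exact hf'mem _ hj2
          · have h1 : runnerCount p m mu (p-1) - w ≤ f' j :=
              le_trans hj1 (hf'ge j hj2)
            have := Nat.mul_le_mul_left p h1
            omega
      rw [hset, Finset.card_image_of_injOn, Nat.card_Ico]
      · omega
      · intro a ha b hb hab
        simp only [Finset.coe_Ico, Set.mem_Ico] at ha hb
        simp only [add_left_inj] at hab
        have hfab : f' a = f' b := Nat.eq_of_mul_eq_mul_left hp hab
        by_contra hne
        rcases Nat.lt_or_ge a b with h | h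
        · exact absurd hfab (Nat.ne_of_lt (hf'mono a b h hb.2))
        · have : b < a := by omega
          exact absurd hfab.symm (Nat.ne_of_lt (hf'mono b a this ha.2))
    -- middle filters agree
    have hmideq : (betaSet m ρ).filter
          (fun x => beta m ρ i < x ∧ x < p * (runnerCount p m mu (p-1) - w) + (p-1))
        = (betaSet m mu).filter
          (fun x => beta m ρ i < x ∧ x < p * (runnerCount p m mu (p-1) - w) + (p-1)) := by
      ext x
      simp only [Finset.mem_filter]
      constructor
      · rintro ⟨hx, h2⟩
        exact ⟨(htrans x h2.2).mp hx, h2⟩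
      · rintro ⟨hx, h2⟩
        exact ⟨(htrans x h2.2).mpr hx, h2⟩
    -- splitting the counts
    have hsplitcnt : ∀ B : Finset ℕ, (B.filter (fun x => beta m ρ i < x)).card
        = (B.filter (fun x => p * (runnerCount p m mu (p-1) - w) + (p-1) ≤ x)).card
          + (B.filter (fun x => beta m ρ i < x
              ∧ x < p * (runnerCount p m mu (p-1) - w) + (p-1))).card := by
      intro B
      have h := Finset.card_filter_add_card_filter_not
        (s := B.filter (fun x => beta m ρ i < x))
        (p := fun x => p * (runnerCount p m mu (p-1) - w) + (p-1) ≤ x)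
      rw [Finset.filter_filter, Finset.filter_filter] at h
      have e1 : B.filter (fun x => beta m ρ i < x
            ∧ p * (runnerCount p m mu (p-1) - w) + (p-1) ≤ x)
          = B.filter (fun x => p * (runnerCount p m mu (p-1) - w) + (p-1) ≤ x) := by
        ext x
        simp only [Finset.mem_filter]
        constructor
        · rintro ⟨hx, _, h2⟩
          exact ⟨hx, h2⟩
        · rintro ⟨hx, h2⟩
          exact ⟨hx, by omega, h2⟩
      have e2 : B.filter (fun x => beta m ρ i < x
            ∧ ¬ (p * (runnerCount p m mu (p-1) - w) + (p-1) ≤ x))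
          = B.filter (fun x => beta m ρ i < x
            ∧ x < p * (runnerCount p m mu (p-1) - w) + (p-1)) := by
        ext x
        simp only [Finset.mem_filter]
        constructor
        · rintro ⟨hx, h1, h2⟩
          exact ⟨hx, h1, by omega⟩
        · rintro ⟨hx, h1, h2⟩
          exact ⟨hx, h1, by omega⟩
      rw [e1, e2] at h
      omega
    have hbmemμ : beta m ρ i ∈ betaSet m mu := (htrans _ hbN).mp hbmemρ
    have hcountμ : ((betaSet m mu).filter (fun x => beta m ρ i < x)).card = i := by
      have h1 := hsplitcnt (betaSet m ρ)
      have h2 := hsplitcnt (betaSet m mu)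
      rw [hcntρ, hcountρ] at h1
      rw [hcntμ] at h2
      rw [hmideq] at h1
      omega
    exact beta_eq_of_count hmua him hbmemμ hcountμ
  -- nu vanishes from w on
  have hnuzero : ∀ i, w ≤ i → nu i = 0 := by
    intro i hiw
    simp only [hnu]
    by_cases hic : i < runnerCount p m mu (p-1)
    · rw [if_pos hic, hδzero _ (by omega)]
      omega
    · rw [if_neg hic]
  -- the main identity
  have hkey : ∀ i, mu i = ρ i + p * nu i := by
    intro i
    rcases Nat.lt_or_ge i m with him | him
    · rcases hcase i him with ⟨hic, hH⟩ | hiw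
      · have h1 := hμtop i hic hH
        have h2 := hρtop i hic hH
        have hge := hf'ge (runnerCount p m mu (p-1) - 1 - i) (by omega)
        have hnui : nu i = f' (runnerCount p m mu (p-1) - 1 - i)
            - (runnerCount p m mu (p-1) - 1 - i) := by
          simp only [hnu, if_pos hic]
        have e1 : mu i + (m-1-i) = p * f' (runnerCount p m mu (p-1) - 1 - i) + (p-1) := h1
        have e2 : ρ i + (m-1-i) = p * (runnerCount p m mu (p-1) - 1 - i) + (p-1) := h2
        have e3 : p * f' (runnerCount p m mu (p-1) - 1 - i)
            = p * (runnerCount p m mu (p-1) - 1 - i)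
              + p * (f' (runnerCount p m mu (p-1) - 1 - i)
                - (runnerCount p m mu (p-1) - 1 - i)) := by
          rw [← Nat.mul_add]
          congr 1
          omega
        rw [hnui]
        omega
      · have h1 := hmid i hiw him
        have e1 : mu i + (m-1-i) = ρ i + (m-1-i) := h1
        rw [hnuzero i hiw]
        omega
    · have h1 : mu i = 0 := hmum i him
      have h2 : ρ i = 0 := hρm i him
      have hnui : nu i = 0 := by
        simp only [hnu]
        rw [if_neg (by omega)]
      rw [hnui]
      omega
  -- nu is antitone
  have hnuanti : Antitone nu := by
    intro i j hij
    simp only [hnu]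
    by_cases hjc : j < runnerCount p m mu (p-1)
    · have hic : i < runnerCount p m mu (p-1) := by omega
      rw [if_pos hjc, if_pos hic]
      have hd := hf'add ((runnerCount p m mu (p-1) - 1 - i)
          - (runnerCount p m mu (p-1) - 1 - j)) (runnerCount p m mu (p-1) - 1 - j)
        (by omega)
      rw [show (runnerCount p m mu (p-1) - 1 - j)
          + ((runnerCount p m mu (p-1) - 1 - i) - (runnerCount p m mu (p-1) - 1 - j))
          = runnerCount p m mu (p-1) - 1 - i from by omega] at hd
      omega
    · rw [if_neg hjc]
      exact Nat.zero_le _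
  -- the size of nu
  have hnusum : ∑ i ∈ range w, nu i = w := by
    have hsc : ∑ i ∈ range (runnerCount p m mu (p-1)), nu i = w := by
      have h1 : ∀ i ∈ range (runnerCount p m mu (p-1)),
          nu i = f' (runnerCount p m mu (p-1) - 1 - i)
            - (runnerCount p m mu (p-1) - 1 - i) := by
        intro i hi
        simp only [hnu, if_pos (Finset.mem_range.1 hi)]
      rw [Finset.sum_congr rfl h1]
      have h2 := Finset.sum_range_reflect (fun j => f' j - j) (runnerCount p m mu (p-1))
      beta_reduce at h2
      rw [h2]
      exact hδsum
    rcases le_or_gt w (runnerCount p m mu (p-1)) with hwc | hwc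
    · have h := Finset.sum_subset (Finset.range_subset_range.2 hwc) (f := nu) (fun i hi hni => by
        simp only [Finset.mem_range] at hi hni
        exact hnuzero i (by omega))
      rw [h]
      exact hsc
    · have h := Finset.sum_subset (Finset.range_subset_range.2 (le_of_lt hwc)) (f := nu)
        (fun i hi hni => by
          simp only [Finset.mem_range] at hi hni
          simp only [hnu]
          rw [if_neg (by omega)])
      rw [← h]
      exact hsc
  exact ⟨nu, ⟨hnuanti, runnerCount p m mu (p-1), fun i hi => by
      simp only [hnu]; rw [if_neg (by omega)]⟩, hnusum, hnuzero, hkey⟩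

end CaseA

end S9

theorem not_dominates_rightmost_runner
    (p m w : ℕ) (hp : 0 < p) (hw : 0 < w)
    (ρ : ℕ → ℕ) (hρ : IsPartition ρ) (hρm : ∀ i, m ≤ i → ρ i = 0)
    (hrouq : IsRouquierCore p m w ρ)
    (mu : ℕ → ℕ) (hmu : IsPartition mu) (hmum : ∀ i, m ≤ i → mu i = 0)
    (hcore : HasCore p m mu ρ) (hwt : pweight p m mu = w)
    -- `μ ∉ Θ_w`
    (hnot : ¬ ∃ nu : ℕ → ℕ, IsPartition nu ∧ (∑ i ∈ Finset.range w, nu i = w) ∧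
      (∀ i, w ≤ i → nu i = 0) ∧ (∀ i, mu i = ρ i + p * nu i))
    -- `θ = (ρ₁ + pν₁, ρ₂ + pν₂, …) ∈ Θ_w`
    (nu : ℕ → ℕ) (hnu : IsPartition nu) (hnusize : ∑ i ∈ Finset.range w, nu i = w)
    (hnuparts : ∀ i, w ≤ i → nu i = 0) :
    -- `μ` does not dominate `θ`
    ∃ j, ∑ i ∈ Finset.range j, mu i < ∑ i ∈ Finset.range j, (ρ i + p * nu i) := by
  obtain ⟨hρanti, -⟩ := hρ
  obtain ⟨hmuanti, -⟩ := hmu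
  obtain ⟨hρcore', hCeq⟩ := hcore
  obtain ⟨-, hrineq⟩ := hrouq
  have hρcore : pweight p m ρ = 0 := hρcore'
  by_cases hAcond : ∀ s, s < p - 1 → S9.rsum p m mu s = S9.tri (runnerCount p m mu s)
  · exact absurd (S9.caseA p m w hp hw ρ mu hρanti hmuanti hρm hmum hrineq hρcore
      hCeq hwt hAcond) hnot
  · push_neg at hAcond
    obtain ⟨s0, hs0, hne⟩ := hAcond
    have hlt : S9.tri (runnerCount p m mu s0) < S9.rsum p m mu s0 := by
      have := S9.tri_le_rsum (p := p) (m := m) mu s0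
      omega
    have hB := S9.caseB p m w hp hw ρ mu hρanti hmuanti hrineq hρcore hCeq hwt s0 hs0 hlt
    refine ⟨w, ?_⟩
    have e1 : ∑ i ∈ Finset.range w, beta m mu i
        = ∑ i ∈ Finset.range w, mu i + ∑ i ∈ Finset.range w, (m-1-i) := by
      rw [← Finset.sum_add_distrib]
      rfl
    have e2 : ∑ i ∈ Finset.range w, beta m ρ i
        = ∑ i ∈ Finset.range w, ρ i + ∑ i ∈ Finset.range w, (m-1-i) := by
      rw [← Finset.sum_add_distrib]
      rfl
    have e3 : ∑ i ∈ Finset.range w, (ρ i + p * nu i)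
        = ∑ i ∈ Finset.range w, ρ i + p * w := by
      rw [Finset.sum_add_distrib, ← Finset.mul_sum, hnusize]
    omega
end
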